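/- arXiv:1308.3187 — 9 statements merged into one kernel-verified Lean document; each statement's English description precedes it below -/
import Mathlib

section
/- Let F_z, F_q, F_p, F_b be subcomplexes of an ungraded chain complex (C,d) with F_z ⊆ F_q and F_p ⊆ F_b. The inclusion F_p ⊆ F_b induces a chain map of quotient complexes F_p/F_z → F_b/F_q (quotients taken with the convention X/Y := X/(X ∩ Y)) and hence a homomorphism H(F_p/F_z) → H(F_b/F_q) on homology, where H(F/F') := ker(d̄)/im(d̄) for the differential d̄ induced by d on the quotient complex. Then the S-term S^{pz}_{bq} is isomorphic to the image of this homomorphism H(F_p/F_z) → H(F_b/F_q). -/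
/-!
Every cycle of `F_p/F_z` is the class of some `x ∈ F_p` with `d x ∈ F_z`, so `x ↦ [x]` maps
`F_p ∩ d⁻¹(F_z)` onto the image of `H(F_p/F_z) → H(F_b/F_q)`. The class of `x` in `F_b/F_q` is a
boundary exactly when `x ≡ d y (mod F_q)` for some `y ∈ F_b`, i.e. when `x ∈ d(F_b) + F_q`; the
first isomorphism theorem finishes the proof.
-/

open Function

/-- The numerator subgroup `F_p ∩ d⁻¹(F_z)` of an S-term. -/
abbrev Snum {C : Type*} [AddCommGroup C] (d : C →+ C) (Fp Fz : AddSubgroup C) :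
    AddSubgroup C := Fp ⊓ Fz.comap d

/-- The denominator subgroup `d(F_b) + F_q` of an S-term. -/
abbrev Sden {C : Type*} [AddCommGroup C] (d : C →+ C) (Fb Fq : AddSubgroup C) :
    AddSubgroup C := Fb.map d ⊔ Fq

/-- The S-term `S^{pz}_{bq} = (F_p ∩ d⁻¹(F_z)) / ((F_p ∩ d⁻¹(F_z)) ∩ (d(F_b) + F_q))`. -/
abbrev Sterm {C : Type*} [AddCommGroup C] (d : C →+ C) (Fp Fz Fb Fq : AddSubgroup C) :=
  ↥(Snum d Fp Fz) ⧸ (Sden d Fb Fq).addSubgroupOf (Snum d Fp Fz)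

/-- The class of an element `x ∈ F_p ∩ d⁻¹(F_z)` in the S-term. -/
def Scls {C : Type*} [AddCommGroup C] (d : C →+ C) (Fp Fz Fb Fq : AddSubgroup C)
    {x : C} (hx : x ∈ Snum d Fp Fz) : Sterm d Fp Fz Fb Fq :=
  QuotientAddGroup.mk ⟨x, hx⟩

/-- The quotient complex `F/F' := F/(F ∩ F')` (as a group). -/
abbrev QC {C : Type*} [AddCommGroup C] (F F' : AddSubgroup C) :=
  ↥F ⧸ F'.addSubgroupOf F

/-- The class of `x ∈ F` in the quotient complex `F/F'`. -/
def QCmk {C : Type*} [AddCommGroup C] (F F' : AddSubgroup C) {x : C} (hx : x ∈ F) :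
    QC F F' := QuotientAddGroup.mk ⟨x, hx⟩

/-- The differential induced by `d` on the quotient complex `F/F'`. -/
def qdiff {C : Type*} [AddCommGroup C] (d : C →+ C) (F F' : AddSubgroup C)
    (hF : ∀ x ∈ F, d x ∈ F) (hF' : ∀ x ∈ F', d x ∈ F') : QC F F' →+ QC F F' :=
  QuotientAddGroup.lift _
    ((QuotientAddGroup.mk' _).comp
      (AddMonoidHom.codRestrict (d.comp (AddSubmonoidClass.subtype F)) F (fun x => hF x.1 x.2)))
    (fun x hx =>
      (QuotientAddGroup.eq_zero_iff _).mpr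
        (AddSubgroup.mem_addSubgroupOf.mpr
          (hF' x.1 (AddSubgroup.mem_addSubgroupOf.mp hx))))

/-- The homology `ker f / im f` of an (ungraded) differential `f`. -/
abbrev Hgy {A : Type*} [AddCommGroup A] (f : A →+ A) :=
  ↥f.ker ⧸ f.range.addSubgroupOf f.ker

theorem AddMonoidHom.range_comp_of_surjective {A B D : Type*} [AddGroup A] [AddGroup B]
    [AddGroup D] (g : B →+ D) {f : A →+ B} (hf : Surjective f) :
    (g.comp f).range = g.range := by
  rw [AddMonoidHom.range_comp, AddMonoidHom.range_eq_top.mpr hf, ← AddMonoidHom.range_eq_map]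

section QuotientComplex

variable {C : Type*} [AddCommGroup C] (d : C →+ C) {F F' : AddSubgroup C}
  (hF : ∀ x ∈ F, d x ∈ F) (hF' : ∀ x ∈ F', d x ∈ F')

theorem QCmk_eq_zero_iff {x : C} (hx : x ∈ F) : QCmk F F' hx = 0 ↔ x ∈ F' :=
  (QuotientAddGroup.eq_zero_iff _).trans AddSubgroup.mem_addSubgroupOf

theorem qdiff_QCmk {x : C} (hx : x ∈ F) :
    qdiff d F F' hF hF' (QCmk F F' hx) = QCmk F F' (hF x hx) := rfl

theorem QCmk_mem_ker_qdiff_iff {x : C} (hx : x ∈ F) :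
    QCmk F F' hx ∈ (qdiff d F F' hF hF').ker ↔ d x ∈ F' := by
  rw [AddMonoidHom.mem_ker, qdiff_QCmk, QCmk_eq_zero_iff]

theorem QCmk_mem_range_qdiff_iff {x : C} (hx : x ∈ F) :
    QCmk F F' hx ∈ (qdiff d F F' hF hF').range ↔ x ∈ Sden d F F' := by
  have hQCmk_eq_iff {y : C} (hy : y ∈ F) : QCmk F F' hy = QCmk F F' hx ↔ y - x ∈ F' :=
    QuotientAddGroup.eq_iff_sub_mem.trans AddSubgroup.mem_addSubgroupOf
  constructor
  · rintro ⟨v, hv⟩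
    obtain ⟨⟨y, hy⟩, rfl⟩ := QuotientAddGroup.mk_surjective v
    have hdiff : d y - x ∈ F' := (hQCmk_eq_iff (hF y hy)).mp hv
    rw [show x = d y - (d y - x) by abel]
    exact sub_mem (AddSubgroup.mem_sup_left ⟨y, hy, rfl⟩) (AddSubgroup.mem_sup_right hdiff)
  · intro hsum
    obtain ⟨_, ⟨y, hy, rfl⟩, b, hb, hyb⟩ := AddSubgroup.mem_sup.mp hsum
    refine ⟨QCmk F F' hy, (hQCmk_eq_iff (hF y hy)).mpr ?_⟩
    rwa [← hyb, sub_add_cancel_left, neg_mem_iff]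

end QuotientComplex

section HomologyMap

variable {A B : Type*} [AddCommGroup A] [AddCommGroup B] {dA : A →+ A} {dB : B →+ B}
  (f : A →+ B)

theorem Hgy.mk_eq_zero_iff {u : A} (hu : u ∈ dA.ker) :
    (QuotientAddGroup.mk ⟨u, hu⟩ : Hgy dA) = 0 ↔ u ∈ dA.range :=
  (QuotientAddGroup.eq_zero_iff _).trans AddSubgroup.mem_addSubgroupOf

theorem AddMonoidHom.map_mem_ker_of_comp_eq (hf : dB.comp f = f.comp dA) {u : A}
    (hu : u ∈ dA.ker) : f u ∈ dB.ker := by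
  rw [AddMonoidHom.mem_ker, ← AddMonoidHom.comp_apply, hf, AddMonoidHom.comp_apply,
    AddMonoidHom.mem_ker.mp hu, map_zero]

def Hgy.map (hf : dB.comp f = f.comp dA) : Hgy dA →+ Hgy dB :=
  QuotientAddGroup.map _ _
    ((f.comp dA.ker.subtype).codRestrict _ fun u => AddMonoidHom.map_mem_ker_of_comp_eq f hf u.2)
    (by
      rintro ⟨_, _⟩ ⟨v, rfl⟩
      refine ⟨f v, ?_⟩
      rw [← AddMonoidHom.comp_apply, hf]
      rfl)

end HomologyMap

section SubcomplexPair

variable {C : Type*} [AddCommGroup C] (d : C →+ C) {Fz Fq Fp Fb : AddSubgroup C}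
  (hFz : ∀ x ∈ Fz, d x ∈ Fz) (hFq : ∀ x ∈ Fq, d x ∈ Fq)
  (hFp : ∀ x ∈ Fp, d x ∈ Fp) (hFb : ∀ x ∈ Fb, d x ∈ Fb)

def QC.inclusion (hzq : Fz ≤ Fq) (hpb : Fp ≤ Fb) : QC Fp Fz →+ QC Fb Fq :=
  QuotientAddGroup.map _ _ (AddSubgroup.inclusion hpb) fun _ hx => hzq hx

theorem qdiff_comp_inclusion (hzq : Fz ≤ Fq) (hpb : Fp ≤ Fb) :
    (qdiff d Fb Fq hFb hFq).comp (QC.inclusion hzq hpb) =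
      (QC.inclusion hzq hpb).comp (qdiff d Fp Fz hFp hFz) := by
  ext
  rfl

def cycleClass : Snum d Fp Fz →+ Hgy (qdiff d Fp Fz hFp hFz) :=
  (QuotientAddGroup.mk' _).comp <|
    ((QuotientAddGroup.mk' _).comp (AddSubgroup.inclusion inf_le_left)).codRestrict _
      fun x => (QCmk_mem_ker_qdiff_iff d hFp hFz x.2.1).mpr x.2.2

theorem cycleClass_surjective : Surjective (cycleClass d hFz hFp) := by
  intro c
  obtain ⟨⟨u, hu⟩, rfl⟩ := QuotientAddGroup.mk_surjective c
  obtain ⟨⟨x, hx⟩, rfl⟩ := QuotientAddGroup.mk_surjective u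
  exact ⟨⟨x, hx, (QCmk_mem_ker_qdiff_iff d hFp hFz hx).mp hu⟩, rfl⟩

theorem ker_map_comp_cycleClass (hzq : Fz ≤ Fq) (hpb : Fp ≤ Fb) :
    ((Hgy.map _ (qdiff_comp_inclusion d hFz hFq hFp hFb hzq hpb)).comp
      (cycleClass d hFz hFp)).ker = (Sden d Fb Fq).addSubgroupOf (Snum d Fp Fz) := by
  ext x
  rw [AddMonoidHom.mem_ker, AddSubgroup.mem_addSubgroupOf,
    ← QCmk_mem_range_qdiff_iff d hFb hFq (hpb x.2.1)]
  exact Hgy.mk_eq_zero_iff _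

end SubcomplexPair

theorem statement0_general {C : Type*} [AddCommGroup C] (d : C →+ C)
    (Fz Fq Fp Fb : AddSubgroup C)
    (hFz : ∀ x ∈ Fz, d x ∈ Fz) (hFq : ∀ x ∈ Fq, d x ∈ Fq)
    (hFp : ∀ x ∈ Fp, d x ∈ Fp) (hFb : ∀ x ∈ Fb, d x ∈ Fb)
    (hzq : Fz ≤ Fq) (hpb : Fp ≤ Fb) :
    ∃ φ : QC Fp Fz →+ QC Fb Fq,
      (∀ (x : C) (hx : x ∈ Fp) (hx' : x ∈ Fb),
        φ (QCmk Fp Fz hx) = QCmk Fb Fq hx') ∧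
      (∀ u ∈ (qdiff d Fp Fz hFp hFz).ker, φ u ∈ (qdiff d Fb Fq hFb hFq).ker) ∧
      ∃ hφ : Hgy (qdiff d Fp Fz hFp hFz) →+ Hgy (qdiff d Fb Fq hFb hFq),
        (∀ (u : QC Fp Fz) (hu : u ∈ (qdiff d Fp Fz hFp hFz).ker)
            (hu' : φ u ∈ (qdiff d Fb Fq hFb hFq).ker),
          hφ (QuotientAddGroup.mk ⟨u, hu⟩) = QuotientAddGroup.mk ⟨φ u, hu'⟩) ∧
        Nonempty (Sterm d Fp Fz Fb Fq ≃+ hφ.range) := by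
  have hcomm := qdiff_comp_inclusion d hFz hFq hFp hFb hzq hpb
  refine ⟨QC.inclusion hzq hpb, fun _ _ _ => rfl,
    fun _ hu => AddMonoidHom.map_mem_ker_of_comp_eq _ hcomm hu, Hgy.map _ hcomm,
    fun _ _ _ => rfl, ⟨?_⟩⟩
  exact (QuotientAddGroup.quotientAddEquivOfEq
      (ker_map_comp_cycleClass d hFz hFq hFp hFb hzq hpb).symm).trans <|
    (QuotientAddGroup.quotientKerEquivRange _).trans <|
      AddEquiv.addSubgroupCongr <|
        AddMonoidHom.range_comp_of_surjective _ (cycleClass_surjective d hFz hFp)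

/-- For subcomplexes `F_z ⊆ F_q`, `F_p ⊆ F_b` of an ungraded chain complex
`(C,d)`, the inclusion induces a chain map `F_p/F_z → F_b/F_q` and hence a homomorphism
`H(F_p/F_z) → H(F_b/F_q)`, and the S-term `S^{pz}_{bq}` is isomorphic to its image. -/
theorem statement0 {C : Type*} [AddCommGroup C] (d : C →+ C) (hd : ∀ x : C, d (d x) = 0)
    (Fz Fq Fp Fb : AddSubgroup C)
    (hFz : ∀ x ∈ Fz, d x ∈ Fz) (hFq : ∀ x ∈ Fq, d x ∈ Fq)
    (hFp : ∀ x ∈ Fp, d x ∈ Fp) (hFb : ∀ x ∈ Fb, d x ∈ Fb)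
    (hzq : Fz ≤ Fq) (hpb : Fp ≤ Fb) :
    ∃ φ : QC Fp Fz →+ QC Fb Fq,
      (∀ (x : C) (hx : x ∈ Fp) (hx' : x ∈ Fb),
        φ (QCmk Fp Fz hx) = QCmk Fb Fq hx') ∧
      (∀ u ∈ (qdiff d Fp Fz hFp hFz).ker, φ u ∈ (qdiff d Fb Fq hFb hFq).ker) ∧
      ∃ hφ : Hgy (qdiff d Fp Fz hFp hFz) →+ Hgy (qdiff d Fb Fq hFb hFq),
        (∀ (u : QC Fp Fz) (hu : u ∈ (qdiff d Fp Fz hFp hFz).ker)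
            (hu' : φ u ∈ (qdiff d Fb Fq hFb hFq).ker),
          hφ (QuotientAddGroup.mk ⟨u, hu⟩) = QuotientAddGroup.mk ⟨φ u, hu'⟩) ∧
        Nonempty (Sterm d Fp Fz Fb Fq ≃+ hφ.range) :=
  statement0_general d Fz Fq Fp Fb hFz hFq hFp hFb hzq hpb
end

section
/- Let F_{z1} ⊆ F_{q1} ⊆ F_{p1} ⊆ F_{b1} and F_{z2} ⊆ F_{q2} ⊆ F_{p2} ⊆ F_{b2} be subcomplexes of an ungraded chain complex (C,d) satisfying F_{z2} ⊆ F_{p1}, F_{q2} = F_{b1}, and F_{q1} ⊆ F_{z2}. Then: (a) the assignment sending the class of x to the class of d(x) is a well-defined homomorphism d : S^{p2,z2}_{b2,q2} → S^{p1,z1}_{b1,q1}; (b) setting F_{z*} := F_{z2} ∩ F_{q1} (a subcomplex), the map S^{p2,z*}_{b2,q2} → S^{p2,z2}_{b2,q2} given by the identity on representatives is injective, and its image equals ker(d). -/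
/-!
Both maps are induced by additive maps of representatives (`d` and the identity), so
everything reduces to membership checks. The differential is well defined because `d ∘ d = 0`
kills `d(F_{b2})` and `d(F_{q2}) = d(F_{b1})`. If `[d x] = 0`, write `d x = d b + z` with
`b ∈ F_{b1} = F_{q2}` and `z ∈ F_{q1}`; then `x - b` represents the same class as `x`, and its
boundary `z` lies in `F_{z2} ∩ F_{q1}` because `F_{q1} ⊆ F_{z2}`.
-/

open Function

namespace Sterm

variable {C : Type*} [AddCommGroup C] (d : C →+ C)
variable {Fp Fz Fb Fq Fp' Fz' Fb' Fq' : AddSubgroup C}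

theorem cls_eq_zero_iff {x : C} (hx : x ∈ Snum d Fp Fz) :
    Scls d Fp Fz Fb Fq hx = 0 ↔ x ∈ Sden d Fb Fq :=
  QuotientAddGroup.eq_zero_iff _

theorem cls_eq_cls_iff {x y : C} (hx : x ∈ Snum d Fp Fz) (hy : y ∈ Snum d Fp Fz) :
    Scls d Fp Fz Fb Fq hx = Scls d Fp Fz Fb Fq hy ↔ x - y ∈ Sden d Fb Fq := by
  rw [← sub_eq_zero, ← cls_eq_zero_iff d (sub_mem hx hy)]
  rfl

theorem exists_cls (q : Sterm d Fp Fz Fb Fq) :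
    ∃ (x : C) (hx : x ∈ Snum d Fp Fz), Scls d Fp Fz Fb Fq hx = q := by
  induction q using QuotientAddGroup.induction_on with
  | H x => exact ⟨x, x.2, rfl⟩

def map (f : C →+ C) (hnum : ∀ x ∈ Snum d Fp Fz, f x ∈ Snum d Fp' Fz')
    (hden : ∀ x ∈ Snum d Fp Fz, x ∈ Sden d Fb Fq → f x ∈ Sden d Fb' Fq') :
    Sterm d Fp Fz Fb Fq →+ Sterm d Fp' Fz' Fb' Fq' :=
  QuotientAddGroup.map _ _ ((f.comp (Snum d Fp Fz).subtype).codRestrict _ fun x => hnum x x.2)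
    fun x hx => hden x x.2 hx

theorem map_cls (f : C →+ C) (hnum : ∀ x ∈ Snum d Fp Fz, f x ∈ Snum d Fp' Fz')
    (hden : ∀ x ∈ Snum d Fp Fz, x ∈ Sden d Fb Fq → f x ∈ Sden d Fb' Fq')
    {x : C} (hx : x ∈ Snum d Fp Fz) (hfx : f x ∈ Snum d Fp' Fz') :
    map d f hnum hden (Scls d Fp Fz Fb Fq hx) = Scls d Fp' Fz' Fb' Fq' hfx :=
  rfl

theorem map_injective (f : C →+ C) (hnum : ∀ x ∈ Snum d Fp Fz, f x ∈ Snum d Fp' Fz')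
    (hden : ∀ x ∈ Snum d Fp Fz, x ∈ Sden d Fb Fq → f x ∈ Sden d Fb' Fq')
    (hreflect : ∀ x ∈ Snum d Fp Fz, f x ∈ Sden d Fb' Fq' → x ∈ Sden d Fb Fq) :
    Injective (map d f hnum hden) := by
  refine (injective_iff_map_eq_zero _).mpr fun q hq => ?_
  obtain ⟨x, hx, rfl⟩ := exists_cls d q
  rw [map_cls d f hnum hden hx (hnum x hx), cls_eq_zero_iff] at hq
  exact (cls_eq_zero_iff d hx).mpr (hreflect x hx hq)

theorem d_mem_snum (hd : ∀ x : C, d (d x) = 0) (hz : Fz ≤ Fp') {x : C}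
    (hx : x ∈ Snum d Fp Fz) : d x ∈ Snum d Fp' Fz' :=
  ⟨hz hx.2, by simp [hd]⟩

theorem d_mem_sden (hd : ∀ x : C, d (d x) = 0) (hq : Fq ≤ Fb') {x : C}
    (hx : x ∈ Sden d Fb Fq) : d x ∈ Sden d Fb' Fq' := by
  obtain ⟨_, ⟨b, -, rfl⟩, y, hy, rfl⟩ := AddSubgroup.mem_sup.mp hx
  rw [map_add, hd, zero_add]
  exact AddSubgroup.mem_sup_left ⟨y, hq hy, rfl⟩

def boundary (hd : ∀ x : C, d (d x) = 0) (hz : Fz ≤ Fp') (hq : Fq ≤ Fb') :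
    Sterm d Fp Fz Fb Fq →+ Sterm d Fp' Fz' Fb' Fq' :=
  map d d (fun _ hx => d_mem_snum d hd hz hx) fun _ _ hx => d_mem_sden d hd hq hx

theorem boundary_cls (hd : ∀ x : C, d (d x) = 0) (hz : Fz ≤ Fp') (hq : Fq ≤ Fb') {x : C}
    (hx : x ∈ Snum d Fp Fz) (hdx : d x ∈ Snum d Fp' Fz') :
    boundary d hd hz hq (Scls d Fp Fz Fb Fq hx) = Scls d Fp' Fz' Fb' Fq' hdx :=
  rfl

theorem snum_mono (hz : Fz ≤ Fz') : Snum d Fp Fz ≤ Snum d Fp Fz' :=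
  inf_le_inf_left _ (AddSubgroup.comap_mono hz)

def inclusion (hz : Fz ≤ Fz') : Sterm d Fp Fz Fb Fq →+ Sterm d Fp Fz' Fb Fq :=
  map d (AddMonoidHom.id C) (fun _ hx => snum_mono d hz hx) fun _ _ hx => hx

theorem inclusion_cls (hz : Fz ≤ Fz') {x : C} (hx : x ∈ Snum d Fp Fz)
    (hx' : x ∈ Snum d Fp Fz') :
    inclusion d (Fb := Fb) (Fq := Fq) hz (Scls d Fp Fz Fb Fq hx) = Scls d Fp Fz' Fb Fq hx' :=
  rfl

theorem inclusion_injective (hz : Fz ≤ Fz') :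
    Injective (inclusion d (Fp := Fp) (Fb := Fb) (Fq := Fq) hz) :=
  map_injective d _ _ _ fun _ _ hx => hx

theorem exists_sub_mem_of_d_mem_sden (hb : Fb' ≤ Fq) (hqp : Fq ≤ Fp) (hqz : Fq' ≤ Fz) {x : C}
    (hx : x ∈ Snum d Fp Fz) (hdx : d x ∈ Sden d Fb' Fq') :
    ∃ y ∈ Snum d Fp (Fz ⊓ Fq'), x - y ∈ Fq := by
  obtain ⟨_, ⟨b, hb', rfl⟩, z, hz, hbz⟩ := AddSubgroup.mem_sup.mp hdx
  have hdy : d (x - b) = z := by rw [map_sub, ← hbz]; abel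
  refine ⟨x - b, ⟨Fp.sub_mem hx.1 (hqp (hb hb')), ?_, ?_⟩, by simpa using hb hb'⟩
  · exact show d (x - b) ∈ Fz from hdy ▸ hqz hz
  · exact show d (x - b) ∈ Fq' from hdy ▸ hz

theorem range_inclusion_eq_ker_boundary (hd : ∀ x : C, d (d x) = 0) (hz : Fz ≤ Fp')
    (hq : Fq = Fb') (hqp : Fq ≤ Fp) (hqz : Fq' ≤ Fz) :
    (inclusion d (Fp := Fp) (Fb := Fb) (Fq := Fq) (inf_le_left : Fz ⊓ Fq' ≤ Fz)).range =
      (boundary d (Fz' := Fz') (Fq' := Fq') hd hz hq.le).ker := by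
  ext q
  obtain ⟨x, hx, rfl⟩ := exists_cls d q
  rw [AddMonoidHom.mem_ker, boundary_cls d hd hz hq.le hx (d_mem_snum d hd hz hx),
    cls_eq_zero_iff]
  constructor
  · rintro ⟨r, hr⟩
    obtain ⟨y, hy, rfl⟩ := exists_cls d r
    rw [inclusion_cls d _ hy (snum_mono d inf_le_left hy), cls_eq_cls_iff] at hr
    have := d_mem_sden d (Fb' := Fb') (Fq' := Fq') hd hq.le hr
    rw [map_sub] at this
    simpa using sub_mem (AddSubgroup.mem_sup_right hy.2.2) this
  · intro hdx
    obtain ⟨y, hy, hxy⟩ := exists_sub_mem_of_d_mem_sden d hq.ge hqp hqz hx hdx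
    refine ⟨Scls d Fp _ Fb Fq hy, ?_⟩
    rw [inclusion_cls d _ hy (snum_mono d inf_le_left hy), cls_eq_cls_iff, ← neg_sub]
    exact neg_mem (AddSubgroup.mem_sup_right hxy)

end Sterm

open Sterm in
theorem statement2_general {C : Type*} [AddCommGroup C] (d : C →+ C) (hd : ∀ x : C, d (d x) = 0)
    (Fz1 Fq1 Fp1 Fb1 Fz2 Fq2 Fp2 Fb2 : AddSubgroup C)
    (h5 : Fq2 ≤ Fp2)
    (hA : Fz2 ≤ Fp1) (hB : Fq2 = Fb1) (hC : Fq1 ≤ Fz2) :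
    ∃ D : Sterm d Fp2 Fz2 Fb2 Fq2 →+ Sterm d Fp1 Fz1 Fb1 Fq1,
      (∀ (x : C) (hx : x ∈ Snum d Fp2 Fz2) (hdx : d x ∈ Snum d Fp1 Fz1),
        D (Scls d Fp2 Fz2 Fb2 Fq2 hx) = Scls d Fp1 Fz1 Fb1 Fq1 hdx) ∧
      ∃ ι : Sterm d Fp2 (Fz2 ⊓ Fq1) Fb2 Fq2 →+ Sterm d Fp2 Fz2 Fb2 Fq2,
        (∀ (x : C) (hx : x ∈ Snum d Fp2 (Fz2 ⊓ Fq1)) (hx' : x ∈ Snum d Fp2 Fz2),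
          ι (Scls d Fp2 (Fz2 ⊓ Fq1) Fb2 Fq2 hx) = Scls d Fp2 Fz2 Fb2 Fq2 hx') ∧
        Injective ι ∧ ι.range = D.ker :=
  ⟨boundary d hd hA hB.le, fun _ => boundary_cls d hd hA hB.le, inclusion d inf_le_left,
    fun _ => inclusion_cls d inf_le_left, inclusion_injective d inf_le_left,
    range_inclusion_eq_ker_boundary d hd hA hB h5 hC⟩

/-- Under `F_{z2} ⊆ F_{p1}`, `F_{q2} = F_{b1}`, `F_{q1} ⊆ F_{z2}`,
the class of `x` ↦ class of `d x` is a well-defined homomorphism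
`d : S^{p2,z2}_{b2,q2} → S^{p1,z1}_{b1,q1}`, and with `F_{z*} := F_{z2} ∩ F_{q1}` the map
`S^{p2,z*}_{b2,q2} → S^{p2,z2}_{b2,q2}` (identity on representatives) is injective
with image `ker(d)`. -/
theorem statement2 {C : Type*} [AddCommGroup C] (d : C →+ C) (hd : ∀ x : C, d (d x) = 0)
    (Fz1 Fq1 Fp1 Fb1 Fz2 Fq2 Fp2 Fb2 : AddSubgroup C)
    (hFz1 : ∀ x ∈ Fz1, d x ∈ Fz1) (hFq1 : ∀ x ∈ Fq1, d x ∈ Fq1)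
    (hFp1 : ∀ x ∈ Fp1, d x ∈ Fp1) (hFb1 : ∀ x ∈ Fb1, d x ∈ Fb1)
    (hFz2 : ∀ x ∈ Fz2, d x ∈ Fz2) (hFq2 : ∀ x ∈ Fq2, d x ∈ Fq2)
    (hFp2 : ∀ x ∈ Fp2, d x ∈ Fp2) (hFb2 : ∀ x ∈ Fb2, d x ∈ Fb2)
    (h1 : Fz1 ≤ Fq1) (h2 : Fq1 ≤ Fp1) (h3 : Fp1 ≤ Fb1)
    (h4 : Fz2 ≤ Fq2) (h5 : Fq2 ≤ Fp2) (h6 : Fp2 ≤ Fb2)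
    (hA : Fz2 ≤ Fp1) (hB : Fq2 = Fb1) (hC : Fq1 ≤ Fz2) :
    ∃ D : Sterm d Fp2 Fz2 Fb2 Fq2 →+ Sterm d Fp1 Fz1 Fb1 Fq1,
      (∀ (x : C) (hx : x ∈ Snum d Fp2 Fz2) (hdx : d x ∈ Snum d Fp1 Fz1),
        D (Scls d Fp2 Fz2 Fb2 Fq2 hx) = Scls d Fp1 Fz1 Fb1 Fq1 hdx) ∧
      ∃ ι : Sterm d Fp2 (Fz2 ⊓ Fq1) Fb2 Fq2 →+ Sterm d Fp2 Fz2 Fb2 Fq2,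
        (∀ (x : C) (hx : x ∈ Snum d Fp2 (Fz2 ⊓ Fq1)) (hx' : x ∈ Snum d Fp2 Fz2),
          ι (Scls d Fp2 (Fz2 ⊓ Fq1) Fb2 Fq2 hx) = Scls d Fp2 Fz2 Fb2 Fq2 hx') ∧
        Injective ι ∧ ι.range = D.ker :=
  statement2_general d hd Fz1 Fq1 Fp1 Fb1 Fz2 Fq2 Fp2 Fb2 h5 hA hB hC
end

section
/- Let F_{zi} ⊆ F_{qi} ⊆ F_{pi} ⊆ F_{bi} (i = 1,2,3) be subcomplexes of an ungraded chain complex (C,d) satisfying F_{z2} = F_{p1}, F_{q2} = F_{b1}, F_{z3} = F_{p2}, and F_{q3} = F_{b2}. Then the assignments sending the class of x to the class of d(x) give well-defined homomorphisms d3 : S^{p3,z3}_{b3,q3} → S^{p2,z2}_{b2,q2} and d2 : S^{p2,z2}_{b2,q2} → S^{p1,z1}_{b1,q1} with d2 ∘ d3 = 0, and the map sending the class of x ∈ F_{p2} ∩ d⁻¹(F_{q1}) in S^{p2,q1}_{p3,q2} to the class of x in ker(d2)/im(d3) is a well-defined isomorphism S^{p2,q1}_{p3,q2} ≅ ker(d2)/im(d3).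 -/
open Function

section Aux

variable {C : Type*} [AddCommGroup C] (d : C →+ C)

lemma mem_Snum {Fp Fz : AddSubgroup C} {x : C} :
    x ∈ Snum d Fp Fz ↔ x ∈ Fp ∧ d x ∈ Fz := by
  simp [AddSubgroup.mem_inf, AddSubgroup.mem_comap]

lemma mem_Sden {Fb Fq : AddSubgroup C} {x : C} :
    x ∈ Sden d Fb Fq ↔ ∃ b ∈ Fb, ∃ q ∈ Fq, d b + q = x := by
  rw [AddSubgroup.mem_sup]
  constructor
  · rintro ⟨y, hy, z, hz, rfl⟩
    obtain ⟨b, hb, rfl⟩ := hy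
    exact ⟨b, hb, z, hz, rfl⟩
  · rintro ⟨b, hb, q, hq, rfl⟩
    exact ⟨d b, ⟨b, hb, rfl⟩, q, hq, rfl⟩

def dnum (hd : ∀ x : C, d (d x) = 0) (Fp Fz Fp' Fz' : AddSubgroup C) (hA : Fz' = Fp) :
    ↥(Snum d Fp' Fz') →+ ↥(Snum d Fp Fz) where
  toFun x := ⟨d x, (mem_Snum d).2 ⟨hA ▸ ((mem_Snum d).1 x.2).2,
      by rw [hd]; exact Fz.zero_mem⟩⟩
  map_zero' := by ext; simp
  map_add' a b := by ext; simp

def dHom (hd : ∀ x : C, d (d x) = 0) (Fz Fq Fp Fb Fz' Fq' Fp' Fb' : AddSubgroup C)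
    (hA : Fz' = Fp) (hB : Fq' = Fb) :
    Sterm d Fp' Fz' Fb' Fq' →+ Sterm d Fp Fz Fb Fq :=
  QuotientAddGroup.lift _
    ((QuotientAddGroup.mk' _).comp (dnum d hd Fp Fz Fp' Fz' hA)) (by
    intro x hx
    rw [AddSubgroup.mem_addSubgroupOf] at hx
    obtain ⟨b, hb, q, hq, hbq⟩ := (mem_Sden d).1 hx
    show (QuotientAddGroup.mk (dnum d hd Fp Fz Fp' Fz' hA x) :
      Sterm d Fp Fz Fb Fq) = 0
    rw [QuotientAddGroup.eq_zero_iff, AddSubgroup.mem_addSubgroupOf]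
    show d (x : C) ∈ Sden d Fb Fq
    have hdx : d (x : C) = d q := by rw [← hbq]; simp [hd b]
    rw [hdx]
    exact AddSubgroup.mem_sup_left ⟨q, hB ▸ hq, rfl⟩)

lemma dHom_apply (hd : ∀ x : C, d (d x) = 0) (Fz Fq Fp Fb Fz' Fq' Fp' Fb' : AddSubgroup C)
    (hA : Fz' = Fp) (hB : Fq' = Fb) {x : C} (hx : x ∈ Snum d Fp' Fz')
    (hdx : d x ∈ Snum d Fp Fz) :
    dHom d hd Fz Fq Fp Fb Fz' Fq' Fp' Fb' hA hB (Scls d Fp' Fz' Fb' Fq' hx) =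
      Scls d Fp Fz Fb Fq hdx := rfl

end Aux

/-- Under `F_{z2} = F_{p1}`, `F_{q2} = F_{b1}`, `F_{z3} = F_{p2}`,
`F_{q3} = F_{b2}`, the maps class of `x` ↦ class of `d x` give well-defined homomorphisms
`d3 : S^{p3,z3}_{b3,q3} → S^{p2,z2}_{b2,q2}` and `d2 : S^{p2,z2}_{b2,q2} → S^{p1,z1}_{b1,q1}`
with `d2 ∘ d3 = 0`, and class of `x` in `S^{p2,q1}_{p3,q2}` ↦ class of `x` in
`ker(d2)/im(d3)` is a well-defined isomorphism. -/
theorem statement4 {C : Type*} [AddCommGroup C] (d : C →+ C) (hd : ∀ x : C, d (d x) = 0)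
    (Fz1 Fq1 Fp1 Fb1 Fz2 Fq2 Fp2 Fb2 Fz3 Fq3 Fp3 Fb3 : AddSubgroup C)
    (hFz1 : ∀ x ∈ Fz1, d x ∈ Fz1) (hFq1 : ∀ x ∈ Fq1, d x ∈ Fq1)
    (hFp1 : ∀ x ∈ Fp1, d x ∈ Fp1) (hFb1 : ∀ x ∈ Fb1, d x ∈ Fb1)
    (hFz2 : ∀ x ∈ Fz2, d x ∈ Fz2) (hFq2 : ∀ x ∈ Fq2, d x ∈ Fq2)
    (hFp2 : ∀ x ∈ Fp2, d x ∈ Fp2) (hFb2 : ∀ x ∈ Fb2, d x ∈ Fb2)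
    (hFz3 : ∀ x ∈ Fz3, d x ∈ Fz3) (hFq3 : ∀ x ∈ Fq3, d x ∈ Fq3)
    (hFp3 : ∀ x ∈ Fp3, d x ∈ Fp3) (hFb3 : ∀ x ∈ Fb3, d x ∈ Fb3)
    (h11 : Fz1 ≤ Fq1) (h12 : Fq1 ≤ Fp1) (h13 : Fp1 ≤ Fb1)
    (h21 : Fz2 ≤ Fq2) (h22 : Fq2 ≤ Fp2) (h23 : Fp2 ≤ Fb2)
    (h31 : Fz3 ≤ Fq3) (h32 : Fq3 ≤ Fp3) (h33 : Fp3 ≤ Fb3)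
    (hA : Fz2 = Fp1) (hB : Fq2 = Fb1) (hC : Fz3 = Fp2) (hD : Fq3 = Fb2) :
    ∃ (d3 : Sterm d Fp3 Fz3 Fb3 Fq3 →+ Sterm d Fp2 Fz2 Fb2 Fq2)
      (d2 : Sterm d Fp2 Fz2 Fb2 Fq2 →+ Sterm d Fp1 Fz1 Fb1 Fq1),
      (∀ (x : C) (hx : x ∈ Snum d Fp3 Fz3) (hdx : d x ∈ Snum d Fp2 Fz2),
        d3 (Scls d Fp3 Fz3 Fb3 Fq3 hx) = Scls d Fp2 Fz2 Fb2 Fq2 hdx) ∧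
      (∀ (x : C) (hx : x ∈ Snum d Fp2 Fz2) (hdx : d x ∈ Snum d Fp1 Fz1),
        d2 (Scls d Fp2 Fz2 Fb2 Fq2 hx) = Scls d Fp1 Fz1 Fb1 Fq1 hdx) ∧
      d2.comp d3 = 0 ∧
      ∃ e : Sterm d Fp2 Fq1 Fp3 Fq2 ≃+ (↥d2.ker ⧸ d3.range.addSubgroupOf d2.ker),
        ∀ (x : C) (hx : x ∈ Snum d Fp2 Fq1) (hx2 : x ∈ Snum d Fp2 Fz2)
          (hker : Scls d Fp2 Fz2 Fb2 Fq2 hx2 ∈ d2.ker),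
          e (Scls d Fp2 Fq1 Fp3 Fq2 hx) =
            QuotientAddGroup.mk ⟨Scls d Fp2 Fz2 Fb2 Fq2 hx2, hker⟩ := by
  set d3 := dHom d hd Fz2 Fq2 Fp2 Fb2 Fz3 Fq3 Fp3 Fb3 hC hD with hd3def
  set d2 := dHom d hd Fz1 Fq1 Fp1 Fb1 Fz2 Fq2 Fp2 Fb2 hA hB with hd2def
  refine ⟨d3, d2, fun x hx hdx => rfl, fun x hx hdx => rfl, ?_, ?_⟩
  · -- d2 ∘ d3 = 0
    apply AddMonoidHom.ext
    intro z
    refine QuotientAddGroup.induction_on z fun x => ?_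
    have h1 : (d2.comp d3) (QuotientAddGroup.mk x) =
        QuotientAddGroup.mk (dnum d hd Fp1 Fz1 Fp2 Fz2 hA
          (dnum d hd Fp2 Fz2 Fp3 Fz3 hC x)) := rfl
    have h2 : dnum d hd Fp1 Fz1 Fp2 Fz2 hA (dnum d hd Fp2 Fz2 Fp3 Fz3 hC x) = 0 :=
      Subtype.ext (hd x)
    rw [h1, h2]
    rfl
  · -- the isomorphism
    have memnum : ∀ {x : C}, x ∈ Snum d Fp2 Fq1 → x ∈ Snum d Fp2 Fz2 := by
      intro x h
      obtain ⟨h1, h2⟩ := (mem_Snum d).1 h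
      exact (mem_Snum d).2 ⟨h1, by rw [hA]; exact h12 h2⟩
    have kerpf : ∀ {x : C} (h : x ∈ Snum d Fp2 Fq1),
        Scls d Fp2 Fz2 Fb2 Fq2 (memnum h) ∈ d2.ker := by
      intro x h
      rw [AddMonoidHom.mem_ker]
      show (QuotientAddGroup.mk (dnum d hd Fp1 Fz1 Fp2 Fz2 hA ⟨x, memnum h⟩) :
        Sterm d Fp1 Fz1 Fb1 Fq1) = 0
      rw [QuotientAddGroup.eq_zero_iff, AddSubgroup.mem_addSubgroupOf]
      exact AddSubgroup.mem_sup_right ((mem_Snum d).1 h).2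
    let φ0 : ↥(Snum d Fp2 Fq1) →+ ↥d2.ker :=
      { toFun := fun x => ⟨Scls d Fp2 Fz2 Fb2 Fq2 (memnum x.2), kerpf x.2⟩
        map_zero' := Subtype.ext (congrArg QuotientAddGroup.mk (Subtype.ext rfl))
        map_add' := fun a b => Subtype.ext (by
          show Scls d Fp2 Fz2 Fb2 Fq2 _ = Scls d Fp2 Fz2 Fb2 Fq2 _ + Scls d Fp2 Fz2 Fb2 Fq2 _
          unfold Scls
          rw [← QuotientAddGroup.mk_add]
          exact congrArg _ (Subtype.ext rfl)) }
    have wd : ∀ x ∈ (Sden d Fp3 Fq2).addSubgroupOf (Snum d Fp2 Fq1),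
        (QuotientAddGroup.mk' (d3.range.addSubgroupOf d2.ker)).comp φ0 x = 0 := by
      intro x hx
      rw [AddSubgroup.mem_addSubgroupOf] at hx
      obtain ⟨b, hb, q, hq, hbq⟩ := (mem_Sden d).1 hx
      show (QuotientAddGroup.mk (φ0 x) : _) = 0
      rw [QuotientAddGroup.eq_zero_iff, AddSubgroup.mem_addSubgroupOf]
      have hbm : b ∈ Snum d Fp3 Fz3 := by
        refine (mem_Snum d).2 ⟨hb, ?_⟩
        have : d b = (x : C) - q := by rw [← hbq]; abel
        rw [hC, this]
        exact sub_mem ((mem_Snum d).1 x.2).1 (h22 hq)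
      refine ⟨QuotientAddGroup.mk ⟨b, hbm⟩, ?_⟩
      show (QuotientAddGroup.mk (dnum d hd Fp2 Fz2 Fp3 Fz3 hC ⟨b, hbm⟩) : _) =
        Scls d Fp2 Fz2 Fb2 Fq2 (memnum x.2)
      rw [Scls, QuotientAddGroup.eq, AddSubgroup.mem_addSubgroupOf]
      show -(d b) + (x : C) ∈ Sden d Fb2 Fq2
      have : -(d b) + (x : C) = q := by rw [← hbq]; abel
      rw [this]
      exact AddSubgroup.mem_sup_right hq
    let Φ : Sterm d Fp2 Fq1 Fp3 Fq2 →+ (↥d2.ker ⧸ d3.range.addSubgroupOf d2.ker) :=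
      QuotientAddGroup.lift _ ((QuotientAddGroup.mk' _).comp φ0) wd
    have hinj : Injective Φ := by
      rw [injective_iff_map_eq_zero]
      intro z
      refine QuotientAddGroup.induction_on z fun xs hzero => ?_
      have : (QuotientAddGroup.mk (φ0 xs) : _) = 0 := hzero
      rw [QuotientAddGroup.eq_zero_iff, AddSubgroup.mem_addSubgroupOf] at this
      obtain ⟨w, hw⟩ := this
      revert hw
      refine QuotientAddGroup.induction_on w fun bs hw => ?_
      have hw' : (QuotientAddGroup.mk (dnum d hd Fp2 Fz2 Fp3 Fz3 hC bs) :
          Sterm d Fp2 Fz2 Fb2 Fq2) = QuotientAddGroup.mk ⟨(xs : C), memnum xs.2⟩ := hw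
      rw [QuotientAddGroup.eq, AddSubgroup.mem_addSubgroupOf] at hw'
      obtain ⟨c, hc, q, hq, hcq⟩ := (mem_Sden d).1 hw'
      rw [QuotientAddGroup.eq_zero_iff, AddSubgroup.mem_addSubgroupOf]
      refine (mem_Sden d).2 ⟨(bs : C) + c, ?_, q, hq, ?_⟩
      · exact add_mem ((mem_Snum d).1 bs.2).1 (h32 (by rw [hD]; exact hc))
      · have hcq' : d c + q = -(d (bs : C)) + (xs : C) := hcq
        rw [map_add, add_assoc, hcq', add_neg_cancel_left]
    have hsurj : Surjective Φ := by
      intro z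
      refine QuotientAddGroup.induction_on z fun w => ?_
      obtain ⟨u, hu⟩ := w
      revert hu
      refine QuotientAddGroup.induction_on u fun ys => ?_
      intro hu
      have hu' : (QuotientAddGroup.mk (dnum d hd Fp1 Fz1 Fp2 Fz2 hA ys) :
          Sterm d Fp1 Fz1 Fb1 Fq1) = 0 := hu
      rw [QuotientAddGroup.eq_zero_iff, AddSubgroup.mem_addSubgroupOf] at hu'
      obtain ⟨b, hb, q, hq, hbq⟩ := (mem_Sden d).1 hu'
      have hbq' : d b + q = d (ys : C) := hbq
      have hxmem : (ys : C) - b ∈ Snum d Fp2 Fq1 := by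
        refine (mem_Snum d).2 ⟨sub_mem ((mem_Snum d).1 ys.2).1 (h22 (by rw [hB]; exact hb)), ?_⟩
        have : d ((ys : C) - b) = q := by rw [map_sub, ← hbq']; abel
        rw [this]; exact hq
      refine ⟨QuotientAddGroup.mk ⟨(ys : C) - b, hxmem⟩, ?_⟩
      show (QuotientAddGroup.mk (φ0 ⟨(ys : C) - b, hxmem⟩) : _) = QuotientAddGroup.mk ⟨_, hu⟩
      refine congrArg _ (Subtype.ext ?_)
      show (QuotientAddGroup.mk (⟨(ys : C) - b, memnum hxmem⟩ : ↥(Snum d Fp2 Fz2)) : _) =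
        QuotientAddGroup.mk ys
      rw [QuotientAddGroup.eq, AddSubgroup.mem_addSubgroupOf]
      show -((ys : C) - b) + (ys : C) ∈ Sden d Fb2 Fq2
      have : -((ys : C) - b) + (ys : C) = b := by abel
      rw [this]
      exact AddSubgroup.mem_sup_right (by rw [hB]; exact hb)
    exact ⟨AddEquiv.ofBijective Φ ⟨hinj, hsurj⟩, fun x hx hx2 hker => rfl⟩
end

section
/- Let (F_p)_{p ∈ D(ℤ̄ⁿ)} be a distributive D(ℤ̄ⁿ)-filtration of an ungraded chain complex (C,d). Let z ⊆ q ⊆ p ⊆ b be downsets of ℤ̄ⁿ, let Z := Z(z,q,p,b) and B := B(z,q,p,b), and define z̃ := p∖Z and b̃ := q∪B. Then z̃ and b̃ are downsets with z ⊆ z̃ ⊆ q and p ⊆ b̃ ⊆ b, and the four maps S^{p,z}_{b̃,q} → S^{p,z̃}_{b̃,q} and S^{p,z}_{b,q} → S^{p,z̃}_{b,q} (identity on representatives, enlarging the cycle subgroup from F_p ∩ d⁻¹(F_z) to F_p ∩ d⁻¹(F_{z̃})) as well as S^{p,z}_{b̃,q} → S^{p,z}_{b,q} and S^{p,z̃}_{b̃,q}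 → S^{p,z̃}_{b,q} (identity on representatives, enlarging the denominator from d(F_{b̃}) + F_q to d(F_b) + F_q) are all isomorphisms, forming a commutative square. -/
open Function

/-- `ℤ̄ = ℤ ∪ {−∞, +∞}`. -/
abbrev ZBar := WithBot (WithTop ℤ)

/-- A single step of a path inside `A`: both endpoints are in `A` and they are
comparable. -/
def StepIn {V : Type*} [Preorder V] (A : Set V) (a b : V) : Prop :=
  a ∈ A ∧ b ∈ A ∧ (a ≤ b ∨ b ≤ a)

/-- `x` and `y` are joined by a path inside `A` whose consecutive points are comparable. -/
def ReachIn {V : Type*} [Preorder V] (A : Set V) : V → V → Prop :=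
  Relation.ReflTransGen (StepIn A)

/-- `Z(z,q,p,b)`: the union of the connected components of `p∖z` that intersect `p∖q`. -/
def Zset {V : Type*} [Preorder V] (z q p b : Set V) : Set V :=
  {x | x ∈ p \ z ∧ ∃ y ∈ p \ q, ReachIn (p \ z) x y}

/-- `B(z,q,p,b)`: the union of the connected components of `b∖q` that intersect `p∖q`. -/
def Bset {V : Type*} [Preorder V] (z q p b : Set V) : Set V :=
  {x | x ∈ b \ q ∧ ∃ y ∈ p \ q, ReachIn (b \ q) x y}

/-! Since `Z` is a union of connected components of `p ∖ z`, cutting `p` along it gives downsets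
with `z̃ ∩ (z ∪ Z) = z` and `z̃ ∪ (z ∪ Z) = p`; likewise `b̃ ∩ (b ∖ B) = q` and `b̃ ∪ (b ∖ B) = b`,
and distributivity transports these decompositions to `F`. A relative cycle `a + u` with
`a ∈ F_z̃`, `u ∈ F_{z∪Z}` and `d(a + u) ∈ F_z̃` has `d u ∈ F_z̃ ∩ F_{z∪Z} = F_z` and differs from `u`
by `a ∈ F_z̃ ⊆ F_q`, so enlarging the cycles is onto. A boundary `d(y₁ + y₂) + w ∈ F_b̃` with
`y₁ ∈ F_b̃`, `y₂ ∈ F_{b∖B}`, `w ∈ F_q` has `d y₂ ∈ F_b̃ ∩ F_{b∖B} = F_q`, so it is already in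
`d(F_b̃) + F_q`, and enlarging the boundaries is injective. -/

section Components

variable {V : Type*} [Preorder V]

theorem mem_zset_of_comparable {z q p b : Set V} {x x' : V} (hx : x ∈ Zset z q p b)
    (hx' : x' ∈ p \ z) (hcomp : x' ≤ x ∨ x ≤ x') : x' ∈ Zset z q p b := by
  obtain ⟨hxm, y, hy, hr⟩ := hx
  exact ⟨hx', y, hy, Relation.ReflTransGen.head ⟨hx', hxm, hcomp⟩ hr⟩

theorem mem_bset_of_comparable {z q p b : Set V} {x x' : V} (hx : x ∈ Bset z q p b)
    (hx' : x' ∈ b \ q) (hcomp : x' ≤ x ∨ x ≤ x') : x' ∈ Bset z q p b := by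
  obtain ⟨hxm, y, hy, hr⟩ := hx
  exact ⟨hx', y, hy, Relation.ReflTransGen.head ⟨hx', hxm, hcomp⟩ hr⟩

variable (z q p b : LowerSet V)

def zTilde : LowerSet V where
  carrier := (p : Set V) \ Zset (z : Set V) q p b
  lower' := by
    rintro a c hca ⟨hap, haZ⟩
    refine ⟨p.lower hca hap, fun hcZ => haZ ?_⟩
    exact mem_zset_of_comparable hcZ ⟨hap, fun haz => hcZ.1.2 (z.lower hca haz)⟩ (Or.inr hca)

def zUnionZset : LowerSet V where
  carrier := (z : Set V) ∪ Zset (z : Set V) q p b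
  lower' := by
    rintro a c hca (hc | hc)
    · exact Or.inl (z.lower hca hc)
    · by_cases hcz : c ∈ (z : Set V)
      · exact Or.inl hcz
      · exact Or.inr (mem_zset_of_comparable hc ⟨p.lower hca hc.1.1, hcz⟩ (Or.inl hca))

def bTilde : LowerSet V where
  carrier := (q : Set V) ∪ Bset (z : Set V) q p b
  lower' := by
    rintro a c hca (hc | hc)
    · exact Or.inl (q.lower hca hc)
    · by_cases hcq : c ∈ (q : Set V)
      · exact Or.inl hcq
      · exact Or.inr (mem_bset_of_comparable hc ⟨b.lower hca hc.1.1, hcq⟩ (Or.inl hca))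

def bDiffBset : LowerSet V where
  carrier := (b : Set V) \ Bset (z : Set V) q p b
  lower' := by
    rintro a c hca ⟨hab, haB⟩
    refine ⟨b.lower hca hab, fun hcB => haB ?_⟩
    exact mem_bset_of_comparable hcB ⟨hab, fun haq => hcB.1.2 (q.lower hca haq)⟩ (Or.inr hca)

variable {z q p b}

theorem le_zTilde (hzp : z ≤ p) : z ≤ zTilde z q p b :=
  fun _ hx => ⟨hzp hx, fun hxZ => hxZ.1.2 hx⟩

theorem zTilde_le (hzq : z ≤ q) : zTilde z q p b ≤ q := by
  rintro x ⟨hxp, hxZ⟩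
  by_contra hxq
  exact hxZ ⟨⟨hxp, fun hxz => hxq (hzq hxz)⟩, x, ⟨hxp, hxq⟩, .refl⟩

theorem le_bTilde (hpb : p ≤ b) : p ≤ bTilde z q p b := by
  intro x hx
  by_cases hxq : x ∈ (q : Set V)
  · exact Or.inl hxq
  · exact Or.inr ⟨⟨hpb hx, hxq⟩, x, ⟨hx, hxq⟩, .refl⟩

theorem bTilde_le (hqb : q ≤ b) : bTilde z q p b ≤ b := by
  rintro x (hx | hx)
  · exact hqb hx
  · exact hx.1.1

theorem zTilde_inf_zUnionZset (hzp : z ≤ p) : zTilde z q p b ⊓ zUnionZset z q p b = z := by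
  refine SetLike.coe_injective (Set.ext fun x => ⟨?_, fun hx => ?_⟩)
  · rintro ⟨⟨-, hxZ⟩, hxz | hxZ'⟩
    · exact hxz
    · exact absurd hxZ' hxZ
  · exact ⟨le_zTilde hzp hx, Or.inl hx⟩

theorem zTilde_sup_zUnionZset (hzp : z ≤ p) : zTilde z q p b ⊔ zUnionZset z q p b = p := by
  refine SetLike.coe_injective (Set.ext fun x => ⟨?_, fun hxp => ?_⟩)
  · rintro (hx | hx | hx)
    exacts [hx.1, hzp hx, hx.1.1]
  · by_cases hxZ : x ∈ Zset (z : Set V) q p b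
    · exact Or.inr (Or.inr hxZ)
    · exact Or.inl ⟨hxp, hxZ⟩

theorem bTilde_inf_bDiffBset (hqb : q ≤ b) : bTilde z q p b ⊓ bDiffBset z q p b = q := by
  refine SetLike.coe_injective (Set.ext fun x => ⟨?_, fun hxq => ?_⟩)
  · rintro ⟨hxq | hxB, hxw⟩
    · exact hxq
    · exact absurd hxB hxw.2
  · exact ⟨Or.inl hxq, hqb hxq, fun hxB => hxB.1.2 hxq⟩

theorem bTilde_sup_bDiffBset (hqb : q ≤ b) : bTilde z q p b ⊔ bDiffBset z q p b = b := by
  refine SetLike.coe_injective (Set.ext fun x => ⟨?_, fun hxb => ?_⟩)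
  · rintro ((hx | hx) | hx)
    exacts [hqb hx, hx.1.1, hx.1]
  · by_cases hxB : x ∈ Bset (z : Set V) q p b
    · exact Or.inl (Or.inr hxB)
    · exact Or.inr ⟨hxb, hxB⟩

end Components

section Subquotient

variable {G : Type*} [AddCommGroup G] {N N' N'' D D' D'' : AddSubgroup G}

def subquotientMap (hN : N ≤ N') (hD : D ≤ D') :
    N ⧸ D.addSubgroupOf N →+ N' ⧸ D'.addSubgroupOf N' :=
  QuotientAddGroup.map _ _ (AddSubgroup.inclusion hN) fun _ hx => hD hx

theorem subquotientMap_mk (hN : N ≤ N') (hD : D ≤ D') (x : N) :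
    subquotientMap hN hD (x : N ⧸ D.addSubgroupOf N) = (AddSubgroup.inclusion hN x : N') :=
  rfl

theorem subquotientMap_injective (hN : N ≤ N') (hD : D ≤ D') (h : N ⊓ D' ≤ D) :
    Injective (subquotientMap hN hD) := by
  refine (injective_iff_map_eq_zero _).2 fun a ha => ?_
  induction a using QuotientAddGroup.induction_on with
  | H x =>
    rw [subquotientMap_mk, QuotientAddGroup.eq_zero_iff] at ha
    exact (QuotientAddGroup.eq_zero_iff _).2 (h ⟨x.2, ha⟩)

theorem subquotientMap_surjective (hN : N ≤ N') (hD : D ≤ D') (h : N' ≤ N ⊔ D') :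
    Surjective (subquotientMap hN hD) := by
  intro y
  induction y using QuotientAddGroup.induction_on with
  | H x =>
    obtain ⟨a, ha, e, he, hae⟩ := AddSubgroup.mem_sup.1 (h x.2)
    refine ⟨(⟨a, ha⟩ : N), QuotientAddGroup.eq.2 ?_⟩
    rw [AddSubgroup.mem_addSubgroupOf]
    simpa [← hae] using he

theorem subquotientMap_comp (hN : N ≤ N') (hN' : N' ≤ N'') (hD : D ≤ D') (hD' : D' ≤ D'') :
    (subquotientMap hN' hD').comp (subquotientMap hN hD) =
      subquotientMap (hN.trans hN') (hD.trans hD') := by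
  ext
  rfl

end Subquotient

section CycleBoundary

variable {C : Type*} [AddCommGroup C] (d : C →+ C) {A U P Q Z : AddSubgroup C}

theorem snum_le_snum_sup_sden (hA : ∀ x ∈ A, d x ∈ A) (hU : ∀ x ∈ U, d x ∈ U)
    (hP : A ⊔ U = P) (hZ : A ⊓ U = Z) (hAQ : A ≤ Q) (Fb : AddSubgroup C) :
    Snum d P A ≤ Snum d P Z ⊔ Sden d Fb Q := by
  subst hP hZ
  rintro x ⟨hxP, hdx⟩
  obtain ⟨a, ha, u, hu, rfl⟩ := AddSubgroup.mem_sup.1 hxP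
  have hdu : d u ∈ A := by
    simpa using sub_mem (AddSubgroup.mem_comap.1 hdx) (hA a ha)
  refine AddSubgroup.mem_sup.2 ⟨u, ⟨AddSubgroup.mem_sup_right hu, ⟨hdu, hU u hu⟩⟩,
    a, AddSubgroup.mem_sup_right (hAQ ha), add_comm u a⟩

theorem inf_sden_le_sden (hA : ∀ x ∈ A, d x ∈ A) (hU : ∀ x ∈ U, d x ∈ U)
    (hP : A ⊔ U = P) (hQ : A ⊓ U = Q) : A ⊓ Sden d P Q ≤ Sden d A Q := by
  subst hP hQ
  rintro x ⟨hxA, hx⟩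
  obtain ⟨_, ⟨y, hy, rfl⟩, w, hw, rfl⟩ := AddSubgroup.mem_sup.1 hx
  obtain ⟨a, ha, u, hu, rfl⟩ := AddSubgroup.mem_sup.1 hy
  have hdu : d u ∈ A := by
    have hdu_eq : d u = d (a + u) + w - d a - w := by rw [map_add]; abel
    exact hdu_eq ▸ sub_mem (sub_mem hxA (hA a ha)) (AddSubgroup.mem_inf.1 hw).1
  refine AddSubgroup.mem_sup.2 ⟨d a, AddSubgroup.mem_map_of_mem d ha, w + d u,
    add_mem hw ⟨hdu, hU u hu⟩, ?_⟩
  rw [map_add]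
  abel

end CycleBoundary

theorem statement5_general {n : ℕ} {C : Type*} [AddCommGroup C] (d : C →+ C)
    (F : LowerSet (Fin n → ZBar) → AddSubgroup C)
    (hmono : Monotone F)
    (hsub : ∀ a, ∀ x ∈ F a, d x ∈ F a)
    (hinf : ∀ a b, F (a ⊓ b) = F a ⊓ F b)
    (hsup : ∀ a b, F (a ⊔ b) = F a ⊔ F b)
    (z q p b : LowerSet (Fin n → ZBar))
    (hzq : z ≤ q) (hqp : q ≤ p) (hpb : p ≤ b) :
    ∃ (zt bt : LowerSet (Fin n → ZBar)),
      (zt : Set (Fin n → ZBar)) =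
        (p : Set (Fin n → ZBar)) \ Zset (z : Set (Fin n → ZBar)) ↑q ↑p ↑b ∧
      (bt : Set (Fin n → ZBar)) =
        (q : Set (Fin n → ZBar)) ∪ Bset (z : Set (Fin n → ZBar)) ↑q ↑p ↑b ∧
      z ≤ zt ∧ zt ≤ q ∧ p ≤ bt ∧ bt ≤ b ∧
      ∃ (ftop : Sterm d (F p) (F z) (F bt) (F q) →+ Sterm d (F p) (F zt) (F bt) (F q))
        (fbot : Sterm d (F p) (F z) (F b) (F q) →+ Sterm d (F p) (F zt) (F b) (F q))
        (fleft : Sterm d (F p) (F z) (F bt) (F q) →+ Sterm d (F p) (F z) (F b) (F q))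
        (fright : Sterm d (F p) (F zt) (F bt) (F q) →+ Sterm d (F p) (F zt) (F b) (F q)),
        (∀ (x : C) (hx : x ∈ Snum d (F p) (F z)) (hx' : x ∈ Snum d (F p) (F zt)),
          ftop (Scls d (F p) (F z) (F bt) (F q) hx) = Scls d (F p) (F zt) (F bt) (F q) hx') ∧
        (∀ (x : C) (hx : x ∈ Snum d (F p) (F z)) (hx' : x ∈ Snum d (F p) (F zt)),
          fbot (Scls d (F p) (F z) (F b) (F q) hx) = Scls d (F p) (F zt) (F b) (F q) hx') ∧
        (∀ (x : C) (hx : x ∈ Snum d (F p) (F z)),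
          fleft (Scls d (F p) (F z) (F bt) (F q) hx) = Scls d (F p) (F z) (F b) (F q) hx) ∧
        (∀ (x : C) (hx : x ∈ Snum d (F p) (F zt)),
          fright (Scls d (F p) (F zt) (F bt) (F q) hx) = Scls d (F p) (F zt) (F b) (F q) hx) ∧
        Bijective ftop ∧ Bijective fbot ∧ Bijective fleft ∧ Bijective fright ∧
        fright.comp ftop = fbot.comp fleft := by
  have hzp := hzq.trans hqp
  have hqb := hqp.trans hpb
  set zt := zTilde z q p b
  set bt := bTilde z q p b
  have hN : Snum d (F p) (F z) ≤ Snum d (F p) (F zt) :=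
    inf_le_inf_left _ (AddSubgroup.comap_mono (hmono (le_zTilde hzp)))
  have hD : Sden d (F bt) (F q) ≤ Sden d (F b) (F q) :=
    sup_le_sup_right (AddSubgroup.map_mono (hmono (bTilde_le hqb))) _
  have hcycles (Fb : AddSubgroup C) :
      Snum d (F p) (F zt) ≤ Snum d (F p) (F z) ⊔ Sden d Fb (F q) :=
    snum_le_snum_sup_sden d (hsub zt) (hsub (zUnionZset z q p b))
      (by rw [← hsup, zTilde_sup_zUnionZset hzp]) (by rw [← hinf, zTilde_inf_zUnionZset hzp])
      (hmono (zTilde_le hzq)) Fb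
  have hboundaries (Fz : AddSubgroup C) :
      Snum d (F p) Fz ⊓ Sden d (F b) (F q) ≤ Sden d (F bt) (F q) :=
    (inf_le_inf_right _ (inf_le_left.trans (hmono (le_bTilde hpb)))).trans
      (inf_sden_le_sden d (hsub bt) (hsub (bDiffBset z q p b))
        (by rw [← hsup, bTilde_sup_bDiffBset hqb]) (by rw [← hinf, bTilde_inf_bDiffBset hqb]))
  refine ⟨zt, bt, rfl, rfl, le_zTilde hzp, zTilde_le hzq, le_bTilde hpb, bTilde_le hqb,
    subquotientMap hN le_rfl, subquotientMap hN le_rfl,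
    subquotientMap le_rfl hD, subquotientMap le_rfl hD,
    fun _ _ _ => rfl, fun _ _ _ => rfl, fun _ _ => rfl, fun _ _ => rfl,
    ⟨subquotientMap_injective _ _ inf_le_right, subquotientMap_surjective _ _ (hcycles _)⟩,
    ⟨subquotientMap_injective _ _ inf_le_right, subquotientMap_surjective _ _ (hcycles _)⟩,
    ⟨subquotientMap_injective _ _ (hboundaries _), subquotientMap_surjective _ _ le_sup_left⟩,
    ⟨subquotientMap_injective _ _ (hboundaries _), subquotientMap_surjective _ _ le_sup_left⟩,
    by rw [subquotientMap_comp, subquotientMap_comp]⟩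

/-- Reducing S-terms: for a distributive `D(ℤ̄ⁿ)`-filtration and downsets
`z ⊆ q ⊆ p ⊆ b`, with `Z := Z(z,q,p,b)`, `B := B(z,q,p,b)`, `z̃ := p∖Z`, `b̃ := q∪B`,
the sets `z̃`, `b̃` are downsets with `z ⊆ z̃ ⊆ q`, `p ⊆ b̃ ⊆ b`, and the four maps given by
the identity on representatives form a commutative square of isomorphisms
`S^{p,z}_{b̃,q} ≅ S^{p,z̃}_{b̃,q} ≅ S^{p,z̃}_{b,q} ≅ S^{p,z}_{b,q}`. -/
theorem statement5 {n : ℕ} {C : Type*} [AddCommGroup C] (d : C →+ C)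
    (hd : ∀ x : C, d (d x) = 0)
    (F : LowerSet (Fin n → ZBar) → AddSubgroup C)
    (hmono : Monotone F)
    (hsub : ∀ a, ∀ x ∈ F a, d x ∈ F a)
    (hinf : ∀ a b, F (a ⊓ b) = F a ⊓ F b)
    (hsup : ∀ a b, F (a ⊔ b) = F a ⊔ F b)
    (z q p b : LowerSet (Fin n → ZBar))
    (hzq : z ≤ q) (hqp : q ≤ p) (hpb : p ≤ b) :
    ∃ (zt bt : LowerSet (Fin n → ZBar)),
      (zt : Set (Fin n → ZBar)) =
        (p : Set (Fin n → ZBar)) \ Zset (z : Set (Fin n → ZBar)) ↑q ↑p ↑b ∧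
      (bt : Set (Fin n → ZBar)) =
        (q : Set (Fin n → ZBar)) ∪ Bset (z : Set (Fin n → ZBar)) ↑q ↑p ↑b ∧
      z ≤ zt ∧ zt ≤ q ∧ p ≤ bt ∧ bt ≤ b ∧
      ∃ (ftop : Sterm d (F p) (F z) (F bt) (F q) →+ Sterm d (F p) (F zt) (F bt) (F q))
        (fbot : Sterm d (F p) (F z) (F b) (F q) →+ Sterm d (F p) (F zt) (F b) (F q))
        (fleft : Sterm d (F p) (F z) (F bt) (F q) →+ Sterm d (F p) (F z) (F b) (F q))
        (fright : Sterm d (F p) (F zt) (F bt) (F q) →+ Sterm d (F p) (F zt) (F b) (F q)),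
        (∀ (x : C) (hx : x ∈ Snum d (F p) (F z)) (hx' : x ∈ Snum d (F p) (F zt)),
          ftop (Scls d (F p) (F z) (F bt) (F q) hx) = Scls d (F p) (F zt) (F bt) (F q) hx') ∧
        (∀ (x : C) (hx : x ∈ Snum d (F p) (F z)) (hx' : x ∈ Snum d (F p) (F zt)),
          fbot (Scls d (F p) (F z) (F b) (F q) hx) = Scls d (F p) (F zt) (F b) (F q) hx') ∧
        (∀ (x : C) (hx : x ∈ Snum d (F p) (F z)),
          fleft (Scls d (F p) (F z) (F bt) (F q) hx) = Scls d (F p) (F z) (F b) (F q) hx) ∧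
        (∀ (x : C) (hx : x ∈ Snum d (F p) (F zt)),
          fright (Scls d (F p) (F zt) (F bt) (F q) hx) = Scls d (F p) (F zt) (F b) (F q) hx) ∧
        Bijective ftop ∧ Bijective fbot ∧ Bijective fleft ∧ Bijective fright ∧
        fright.comp ftop = fbot.comp fleft :=
  statement5_general d F hmono hsub hinf hsup z q p b hzq hqp hpb
end

section
/- Let (F_p)_{p ∈ D(ℤ̄ⁿ)} be a distributive D(ℤ̄ⁿ)-filtration of an ungraded chain complex (C,d). If z ⊆ q ⊆ p ⊆ b and z' ⊆ q' ⊆ p' ⊆ b' are downsets of ℤ̄ⁿ with Z(z,q,p,b) = Z(z',q',p',b') and B(z,q,p,b) = B(z',q',p',b'), then the S-terms S^{pz}_{bq} and S^{p'z'}_{b'q'} are isomorphic. -/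
open Function

lemma key {C : Type*} [AddCommGroup C] {N N' H H' : AddSubgroup C} (hNN : N ≤ N')
    (hsur : N' ≤ N ⊔ H') (hker : H ⊓ N = H' ⊓ N) :
    Nonempty ((N ⧸ H.addSubgroupOf N) ≃+ (N' ⧸ H'.addSubgroupOf N')) := by
  let φ : N →+ N' ⧸ H'.addSubgroupOf N' :=
    (QuotientAddGroup.mk' _).comp (AddSubgroup.inclusion hNN)
  have hφ : ∀ x : N, φ x = QuotientAddGroup.mk (AddSubgroup.inclusion hNN x) := fun _ => rfl
  have hsurj : Surjective φ := by
    intro y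
    obtain ⟨x, rfl⟩ := QuotientAddGroup.mk'_surjective _ y
    obtain ⟨a, ha, h, hh, hah⟩ := AddSubgroup.mem_sup.mp (hsur x.2)
    refine ⟨⟨a, ha⟩, ?_⟩
    rw [hφ]
    show _ = QuotientAddGroup.mk x
    rw [QuotientAddGroup.eq]
    refine (?_ : ((-(AddSubgroup.inclusion hNN ⟨a, ha⟩) + x : N') : C) ∈ H')
    have : ((AddSubgroup.inclusion hNN ⟨a, ha⟩ : N') : C) = a := rfl
    rw [AddSubgroup.coe_add, AddSubgroup.coe_neg, this]
    have : -a + x = h := by rw [← hah]; abel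
    rw [this]; exact hh
  have hkerφ : φ.ker = H.addSubgroupOf N := by
    ext x
    rw [AddMonoidHom.mem_ker, hφ, QuotientAddGroup.eq_zero_iff]
    change (x : C) ∈ H' ↔ (x : C) ∈ H
    constructor
    · intro hx
      have h2 : (x:C) ∈ H' ⊓ N := ⟨hx, x.2⟩
      rw [← hker] at h2
      exact h2.1
    · intro hx
      have h2 : (x:C) ∈ H ⊓ N := ⟨hx, x.2⟩
      rw [hker] at h2
      exact h2.1
  exact ⟨(QuotientAddGroup.quotientAddEquivOfEq hkerφ.symm).trans
    (QuotientAddGroup.quotientKerEquivOfSurjective φ hsurj)⟩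

section Moves
variable {V : Type*} [Preorder V] {C : Type*} [AddCommGroup C] (d : C →+ C)
  (F : LowerSet V → AddSubgroup C)
  (hmono : Monotone F)
  (hsub : ∀ a, ∀ x ∈ F a, d x ∈ F a)
  (hinf : ∀ a b, F (a ⊓ b) = F a ⊓ F b)
  (hsup : ∀ a b, F (a ⊔ b) = F a ⊔ F b)

include hmono hsub hinf hsup

lemma moveB (z q p b₁ b₂ c : LowerSet V) (hpb : p ≤ b₁)
    (hcup : b₁ ⊔ c = b₂) (hcap : b₁ ⊓ c = q) :
    Sden d (F b₂) (F q) ⊓ Snum d (F p) (F z) = Sden d (F b₁) (F q) ⊓ Snum d (F p) (F z) := by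
  apply le_antisymm
  · rintro x ⟨hxd, hxn⟩
    refine ⟨?_, hxn⟩
    obtain ⟨du, hdu, v, hv, hx⟩ := AddSubgroup.mem_sup.mp hxd
    obtain ⟨u, hu, rfl⟩ := AddSubgroup.mem_map.mp hdu
    rw [← hcup, hsup] at hu
    obtain ⟨u₁, hu₁, u₂, hu₂, rfl⟩ := AddSubgroup.mem_sup.mp hu
    have hxp : x ∈ F b₁ := hmono hpb hxn.1
    have hvq : v ∈ F b₁ := hmono (hcap ▸ inf_le_left : q ≤ b₁) hv
    have hdu₂ : d u₂ ∈ F b₁ ⊓ F c := by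
      refine AddSubgroup.mem_inf.mpr ⟨?_, hsub _ _ hu₂⟩
      have h5 : d u₂ = x - d u₁ - v := by
        rw [← hx, map_add]; abel
      rw [h5]
      exact sub_mem (sub_mem hxp (hsub _ _ hu₁)) hvq
    rw [← hinf, hcap] at hdu₂
    apply AddSubgroup.mem_sup.mpr
    refine ⟨d u₁, AddSubgroup.mem_map.mpr ⟨u₁, hu₁, rfl⟩, v + d u₂, add_mem hv hdu₂, ?_⟩
    rw [← hx, map_add]; abel
  · have hb12 : b₁ ≤ b₂ := hcup ▸ le_sup_left
    exact inf_le_inf_right _ (sup_le_sup_right (AddSubgroup.map_mono (hmono hb12)) _)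

lemma moveZ (z₁ z₂ q p e : LowerSet V) (hz2q : z₂ ≤ q)
    (hep : e ≤ p) (hcup : z₂ ⊔ e = p) (hcap : z₂ ⊓ e = z₁) :
    Snum d (F p) (F z₂) ≤ Snum d (F p) (F z₁) ⊔ F q := by
  rintro x ⟨hxp, hxd⟩
  rw [← hcup, hsup] at hxp
  obtain ⟨s, hs, t, ht, rfl⟩ := AddSubgroup.mem_sup.mp hxp
  have hdt : d t ∈ F z₂ ⊓ F e := by
    refine AddSubgroup.mem_inf.mpr ⟨?_, hsub _ _ ht⟩
    have h5 : d t = d (s + t) - d s := by rw [map_add]; abel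
    rw [h5]
    exact sub_mem hxd (hsub _ _ hs)
  rw [← hinf, hcap] at hdt
  apply AddSubgroup.mem_sup.mpr
  refine ⟨t, ⟨hmono hep ht, hdt⟩, s, hmono hz2q hs, by abel⟩

lemma moveD (z₁ q₁ p₁ b₁ m : LowerSet V)
    (hz1q : z₁ ≤ q₁) (hq1b : q₁ ≤ b₁) (hp1b : p₁ ≤ b₁)
    (hzp : (z₁ ⊔ m) ⊓ p₁ = z₁) (hbm : b₁ ⊓ m = z₁) :
    (Snum d (F (p₁ ⊔ m)) (F (z₁ ⊔ m)) ≤ Snum d (F p₁) (F z₁) ⊔ Sden d (F (b₁ ⊔ m)) (F (q₁ ⊔ m)))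
    ∧ Sden d (F b₁) (F q₁) ⊓ Snum d (F p₁) (F z₁)
      = Sden d (F (b₁ ⊔ m)) (F (q₁ ⊔ m)) ⊓ Snum d (F p₁) (F z₁) := by
  constructor
  · rintro x ⟨hxp, hxd⟩
    rw [hsup] at hxp
    obtain ⟨u, hu, v, hv, rfl⟩ := AddSubgroup.mem_sup.mp hxp
    have hdu : d u ∈ F (z₁ ⊔ m) ⊓ F p₁ := by
      refine AddSubgroup.mem_inf.mpr ⟨?_, hsub _ _ hu⟩
      have h5 : d u = d (u + v) - d v := by rw [map_add]; abel
      rw [h5]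
      exact sub_mem hxd (hmono (le_sup_right : m ≤ z₁ ⊔ m) (hsub _ _ hv))
    rw [← hinf, hzp] at hdu
    apply AddSubgroup.mem_sup.mpr
    refine ⟨u, ⟨hu, hdu⟩, v, ?_, rfl⟩
    exact AddSubgroup.mem_sup.mpr ⟨0, AddSubgroup.zero_mem _,
      v, hmono ((le_sup_right : m ≤ q₁ ⊔ m)) hv, by abel⟩
  · apply le_antisymm
    · refine inf_le_inf_right _ (sup_le_sup ?_ (hmono le_sup_left))
      exact AddSubgroup.map_mono (hmono le_sup_left)
    · rintro x ⟨hxd, hxn⟩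
      refine ⟨?_, hxn⟩
      obtain ⟨dw, hdw, s, hs, hx⟩ := AddSubgroup.mem_sup.mp hxd
      obtain ⟨w, hw, rfl⟩ := AddSubgroup.mem_map.mp hdw
      rw [hsup] at hw hs
      obtain ⟨w₁, hw₁, w₂, hw₂, rfl⟩ := AddSubgroup.mem_sup.mp hw
      obtain ⟨s₁, hs₁, s₂, hs₂, rfl⟩ := AddSubgroup.mem_sup.mp hs
      have hxb : x ∈ F b₁ := hmono hp1b hxn.1
      have ht : d w₂ + s₂ ∈ F b₁ ⊓ F m := by
        refine AddSubgroup.mem_inf.mpr ⟨?_, add_mem (hsub _ _ hw₂) hs₂⟩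
        have h5 : d w₂ + s₂ = x - d w₁ - s₁ := by
          rw [← hx, map_add]; abel
        rw [h5]
        exact sub_mem (sub_mem hxb (hsub _ _ hw₁)) (hmono hq1b hs₁)
      rw [← hinf, hbm] at ht
      apply AddSubgroup.mem_sup.mpr
      refine ⟨d w₁, AddSubgroup.mem_map.mpr ⟨w₁, hw₁, rfl⟩,
        s₁ + (d w₂ + s₂), add_mem hs₁ (hmono hz1q ht), ?_⟩
      rw [← hx, map_add]; abel

lemma sideIso (z q p b zt bt z₀ q₀ p₀ b₀ c e : LowerSet V)
    (h1 : (p : Set V) ⊆ ↑bt) (h2 : (bt : Set V) ∪ ↑c = ↑b) (h3 : (bt : Set V) ∩ ↑c = ↑q)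
    (h4 : (zt : Set V) ⊆ ↑q) (h5 : (e : Set V) ⊆ ↑p) (h6 : (zt : Set V) ∪ ↑e = ↑p)
    (h7 : (zt : Set V) ∩ ↑e = ↑z) (h8 : (z : Set V) ⊆ ↑zt)
    (h9 : (z₀ : Set V) ⊆ ↑zt) (h10 : (q₀ : Set V) ∪ ↑zt = ↑q) (h11 : (p₀ : Set V) ∪ ↑zt = ↑p)
    (h12 : (b₀ : Set V) ∪ ↑zt = ↑bt) (h13 : ((zt : Set V) ∩ ↑p₀ : Set V) = ↑z₀)
    (h14 : (b₀ : Set V) ∩ ↑zt = ↑z₀)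
    (h15 : (z₀ : Set V) ⊆ ↑q₀) (h16 : (q₀ : Set V) ⊆ ↑b₀) (h17 : (p₀ : Set V) ⊆ ↑b₀) :
    Nonempty (Sterm d (F p) (F z) (F b) (F q) ≃+ Sterm d (F p₀) (F z₀) (F b₀) (F q₀)) := by
  -- convert set-level to lattice-level
  have L : ∀ {s t : LowerSet V}, (s : Set V) = ↑t → s = t := fun h => SetLike.coe_injective h
  have S : ∀ {s t : LowerSet V}, (s : Set V) ⊆ ↑t → s ≤ t := fun h => h
  have e2 : bt ⊔ c = b := L (by rw [LowerSet.coe_sup, h2])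
  have e3 : bt ⊓ c = q := L (by rw [LowerSet.coe_inf, h3])
  have e6 : zt ⊔ e = p := L (by rw [LowerSet.coe_sup, h6])
  have e7 : zt ⊓ e = z := L (by rw [LowerSet.coe_inf, h7])
  have e9 : z₀ ⊔ zt = zt := sup_eq_right.mpr (S h9)
  have e10 : q₀ ⊔ zt = q := L (by rw [LowerSet.coe_sup, h10])
  have e11 : p₀ ⊔ zt = p := L (by rw [LowerSet.coe_sup, h11])
  have e12 : b₀ ⊔ zt = bt := L (by rw [LowerSet.coe_sup, h12])
  have e13 : (z₀ ⊔ zt) ⊓ p₀ = z₀ := by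
    rw [e9]; exact L (by rw [LowerSet.coe_inf, h13])
  have e14 : b₀ ⊓ zt = z₀ := L (by rw [LowerSet.coe_inf, h14])
  -- step 1
  obtain ⟨g1⟩ := key (le_refl (Snum d (F p) (F z))) (le_sup_left)
    (moveB d F hmono hsub hinf hsup z q p bt b c (S h1) e2 e3)
  -- step 2
  obtain ⟨g2⟩ := key
    (inf_le_inf_left _ (AddSubgroup.comap_mono (hmono (S h8))) :
      Snum d (F p) (F z) ≤ Snum d (F p) (F zt))
    ((moveZ d F hmono hsub hinf hsup z zt q p e (S h4) (S h5) e6 e7).trans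
      (sup_le_sup_left (le_sup_right : F q ≤ Sden d (F bt) (F q)) _))
    (rfl : Sden d (F bt) (F q) ⊓ Snum d (F p) (F z) = _)
  -- step 3
  obtain ⟨hsurD, hkerD⟩ := moveD d F hmono hsub hinf hsup z₀ q₀ p₀ b₀ zt
    (S h15) (S h16) (S h17) e13 e14
  obtain ⟨g3⟩ := key
    (inf_le_inf (hmono le_sup_left) (AddSubgroup.comap_mono (hmono le_sup_left)) :
      Snum d (F p₀) (F z₀) ≤ Snum d (F (p₀ ⊔ zt)) (F (z₀ ⊔ zt)))
    hsurD hkerD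
  rw [e9, e10, e11, e12] at g3
  exact ⟨(g1.trans g2).trans g3.symm⟩

end Moves

section Sets
variable {V : Type*} [Preorder V] {z q p b : LowerSet V}

lemma Zset_sub : Zset (z : Set V) ↑q ↑p ↑b ⊆ ↑p \ ↑z := fun _ hx => hx.1

lemma Bset_sub : Bset (z : Set V) ↑q ↑p ↑b ⊆ ↑b \ ↑q := fun _ hx => hx.1

lemma sub_Zset (hzq : z ≤ q) : (↑p \ ↑q : Set V) ⊆ Zset ↑z ↑q ↑p ↑b :=
  fun x hx => ⟨⟨hx.1, fun h => hx.2 (hzq h)⟩, x, hx, Relation.ReflTransGen.refl⟩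

lemma sub_Bset (hpb : p ≤ b) : (↑p \ ↑q : Set V) ⊆ Bset ↑z ↑q ↑p ↑b :=
  fun x hx => ⟨⟨hpb hx.1, hx.2⟩, x, hx, Relation.ReflTransGen.refl⟩

lemma Zset_inter_Bset (hzq : z ≤ q) (hpb : p ≤ b) :
    Zset (z : Set V) ↑q ↑p ↑b ∩ Bset ↑z ↑q ↑p ↑b = ↑p \ ↑q := by
  apply Set.Subset.antisymm
  · rintro x ⟨hxZ, hxB⟩
    exact ⟨hxZ.1.1, hxB.1.2⟩
  · intro x hx
    exact ⟨sub_Zset hzq hx, sub_Bset hpb hx⟩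

lemma isLowerSet_q_union_B : IsLowerSet ((↑q : Set V) ∪ Bset ↑z ↑q ↑p ↑b) := by
  intro x y hyx hx
  rcases hx with hx | hx
  · exact Or.inl (q.lower hyx hx)
  · have hyb : y ∈ (b : Set V) := b.lower hyx hx.1.1
    by_cases hyq : y ∈ (q : Set V)
    · exact Or.inl hyq
    · obtain ⟨hxbq, w, hw, hreach⟩ := hx
      exact Or.inr ⟨⟨hyb, hyq⟩, w, hw,
        Relation.ReflTransGen.head ⟨⟨hyb, hyq⟩, hxbq, Or.inl hyx⟩ hreach⟩

lemma isLowerSet_b_diff_B : IsLowerSet ((↑b : Set V) \ Bset ↑z ↑q ↑p ↑b) := by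
  intro x y hyx hx
  refine ⟨b.lower hyx hx.1, fun hy => hx.2 ?_⟩
  obtain ⟨⟨hyb, hyq⟩, w, hw, hreach⟩ := hy
  have hxq : x ∉ (q : Set V) := fun h => hyq (q.lower hyx h)
  exact ⟨⟨hx.1, hxq⟩, w, hw,
    Relation.ReflTransGen.head ⟨⟨hx.1, hxq⟩, ⟨hyb, hyq⟩, Or.inr hyx⟩ hreach⟩

lemma isLowerSet_p_diff_Z : IsLowerSet ((↑p : Set V) \ Zset ↑z ↑q ↑p ↑b) := by
  intro x y hyx hx
  refine ⟨p.lower hyx hx.1, fun hy => hx.2 ?_⟩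
  obtain ⟨⟨hyp, hyz⟩, w, hw, hreach⟩ := hy
  have hxz : x ∉ (z : Set V) := fun h => hyz (z.lower hyx h)
  exact ⟨⟨hx.1, hxz⟩, w, hw,
    Relation.ReflTransGen.head ⟨⟨hx.1, hxz⟩, ⟨hyp, hyz⟩, Or.inr hyx⟩ hreach⟩

lemma isLowerSet_z_union_Z : IsLowerSet ((↑z : Set V) ∪ Zset ↑z ↑q ↑p ↑b) := by
  intro x y hyx hx
  rcases hx with hx | hx
  · exact Or.inl (z.lower hyx hx)
  · have hyp : y ∈ (p : Set V) := p.lower hyx hx.1.1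
    by_cases hyz : y ∈ (z : Set V)
    · exact Or.inl hyz
    · obtain ⟨hxpz, w, hw, hreach⟩ := hx
      exact Or.inr ⟨⟨hyp, hyz⟩, w, hw,
        Relation.ReflTransGen.head ⟨⟨hyp, hyz⟩, hxpz, Or.inl hyx⟩ hreach⟩

end Sets

/-- For a distributive `D(ℤ̄ⁿ)`-filtration of an ungraded chain complex,
two quadruples of downsets `z ⊆ q ⊆ p ⊆ b` and `z' ⊆ q' ⊆ p' ⊆ b'` with the same `Z` and
the same `B` have isomorphic S-terms. -/
theorem statement6 {n : ℕ} {C : Type*} [AddCommGroup C] (d : C →+ C)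
    (hd : ∀ x : C, d (d x) = 0)
    (F : LowerSet (Fin n → ZBar) → AddSubgroup C)
    (hmono : Monotone F)
    (hsub : ∀ a, ∀ x ∈ F a, d x ∈ F a)
    (hinf : ∀ a b, F (a ⊓ b) = F a ⊓ F b)
    (hsup : ∀ a b, F (a ⊔ b) = F a ⊔ F b)
    (z q p b z' q' p' b' : LowerSet (Fin n → ZBar))
    (hzq : z ≤ q) (hqp : q ≤ p) (hpb : p ≤ b)
    (hzq' : z' ≤ q') (hqp' : q' ≤ p') (hpb' : p' ≤ b')
    (hZ : Zset (z : Set (Fin n → ZBar)) ↑q ↑p ↑b = Zset (z' : Set (Fin n → ZBar)) ↑q' ↑p' ↑b')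
    (hB : Bset (z : Set (Fin n → ZBar)) ↑q ↑p ↑b = Bset (z' : Set (Fin n → ZBar)) ↑q' ↑p' ↑b') :
    Nonempty (Sterm d (F p) (F z) (F b) (F q) ≃+ Sterm d (F p') (F z') (F b') (F q')) := by
  classical
  set ZS : Set (Fin n → ZBar) := Zset (z : Set (Fin n → ZBar)) ↑q ↑p ↑b with hZSdef
  set BS : Set (Fin n → ZBar) := Bset (z : Set (Fin n → ZBar)) ↑q ↑p ↑b with hBSdef
  have hZsub : ZS ⊆ ↑p \ ↑z := Zset_sub
  have hZsub' : ZS ⊆ ↑p' \ ↑z' := by rw [hZ]; exact Zset_sub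
  have hBsub : BS ⊆ ↑b \ ↑q := Bset_sub
  have hBsub' : BS ⊆ ↑b' \ ↑q' := by rw [hB]; exact Bset_sub
  have hpqZ : (↑p \ ↑q : Set _) ⊆ ZS := sub_Zset hzq
  have hpqZ' : (↑p' \ ↑q' : Set _) ⊆ ZS := by rw [hZ]; exact sub_Zset hzq'
  have hpqB : (↑p \ ↑q : Set _) ⊆ BS := sub_Bset hpb
  have hpqB' : (↑p' \ ↑q' : Set _) ⊆ BS := by rw [hB]; exact sub_Bset hpb'
  -- lower sets
  let zt : LowerSet (Fin n → ZBar) := ⟨↑p \ ZS, isLowerSet_p_diff_Z⟩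
  let zt' : LowerSet (Fin n → ZBar) := ⟨↑p' \ ZS, by rw [hZ]; exact isLowerSet_p_diff_Z⟩
  let bt : LowerSet (Fin n → ZBar) := ⟨↑q ∪ BS, isLowerSet_q_union_B⟩
  let bt' : LowerSet (Fin n → ZBar) := ⟨↑q' ∪ BS, by rw [hB]; exact isLowerSet_q_union_B⟩
  let c : LowerSet (Fin n → ZBar) := ⟨↑b \ BS, isLowerSet_b_diff_B⟩
  let c' : LowerSet (Fin n → ZBar) := ⟨↑b' \ BS, by rw [hB]; exact isLowerSet_b_diff_B⟩
  let ee : LowerSet (Fin n → ZBar) := ⟨↑z ∪ ZS, isLowerSet_z_union_Z⟩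
  let ee' : LowerSet (Fin n → ZBar) := ⟨↑z' ∪ ZS, by rw [hZ]; exact isLowerSet_z_union_Z⟩
  -- coercion facts
  have czt : (zt : Set _) = ↑p \ ZS := rfl
  have czt' : (zt' : Set _) = ↑p' \ ZS := rfl
  have cbt : (bt : Set _) = ↑q ∪ BS := rfl
  have cbt' : (bt' : Set _) = ↑q' ∪ BS := rfl
  have cc : (c : Set _) = ↑b \ BS := rfl
  have cc' : (c' : Set _) = ↑b' \ BS := rfl
  have cee : (ee : Set _) = ↑z ∪ ZS := rfl
  have cee' : (ee' : Set _) = ↑z' ∪ ZS := rfl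
  -- derived subset facts
  have hztq : (zt : Set (Fin n → ZBar)) ⊆ ↑q := by
    rintro x ⟨hxp, hxZ⟩
    by_contra hq
    exact hxZ (hpqZ ⟨hxp, hq⟩)
  have hztq' : (zt' : Set (Fin n → ZBar)) ⊆ ↑q' := by
    rintro x ⟨hxp, hxZ⟩
    by_contra hq
    exact hxZ (hpqZ' ⟨hxp, hq⟩)
  have hZqq' : ZS ∩ ↑q ⊆ (↑q' : Set _) := by
    rintro x ⟨hxZ, hxq⟩
    by_contra hq'
    exact (hBsub (hpqB' ⟨(hZsub' hxZ).1, hq'⟩)).2 hxq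
  have hZq'q : ZS ∩ ↑q' ⊆ (↑q : Set _) := by
    rintro x ⟨hxZ, hxq⟩
    by_contra hq2
    exact (hBsub' (hpqB ⟨(hZsub hxZ).1, hq2⟩)).2 hxq
  have hBnq : ∀ x ∈ BS, x ∉ (↑q : Set _) := fun x h => (hBsub h).2
  have hBnq' : ∀ x ∈ BS, x ∉ (↑q' : Set _) := fun x h => (hBsub' h).2
  -- quad₀
  let z₀ := zt ⊓ zt'
  let q₀ := q ⊓ q'
  let p₀ := p ⊓ p'
  let b₀ := bt ⊓ bt'
  have cz₀ : (z₀ : Set (Fin n → ZBar)) = ↑zt ∩ ↑zt' := LowerSet.coe_inf _ _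
  have cq₀ : (q₀ : Set (Fin n → ZBar)) = ↑q ∩ ↑q' := LowerSet.coe_inf _ _
  have cp₀ : (p₀ : Set (Fin n → ZBar)) = ↑p ∩ ↑p' := LowerSet.coe_inf _ _
  have cb₀ : (b₀ : Set (Fin n → ZBar)) = ↑bt ∩ ↑bt' := LowerSet.coe_inf _ _
  -- the seventeen hypotheses, unprimed side
  obtain ⟨g⟩ := sideIso d F hmono hsub hinf hsup z q p b zt bt z₀ q₀ p₀ b₀ c ee
    (by -- h1 : p ⊆ bt
      intro x hx
      rw [cbt]
      by_cases hq2 : x ∈ (↑q : Set _)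
      · exact Or.inl hq2
      · exact Or.inr (hpqB ⟨hx, hq2⟩))
    (by -- h2 : bt ∪ c = b
      rw [cbt, cc]
      ext x
      constructor
      · rintro ((hx | hx) | hx)
        · exact hpb (hqp hx)
        · exact (hBsub hx).1
        · exact hx.1
      · intro hx
        by_cases hxB : x ∈ BS
        · exact Or.inl (Or.inr hxB)
        · exact Or.inr ⟨hx, hxB⟩)
    (by -- h3 : bt ∩ c = q
      rw [cbt, cc]
      ext x
      constructor
      · rintro ⟨hx | hx, hb2, hnB⟩
        · exact hx
        · exact absurd hx hnB
      · intro hx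
        exact ⟨Or.inl hx, hpb (hqp hx), fun h => hBnq x h hx⟩)
    hztq
    (by -- h5 : ee ⊆ p
      rw [cee]
      rintro x (hx | hx)
      · exact hqp (hzq hx)
      · exact (hZsub hx).1)
    (by -- h6 : zt ∪ ee = p
      rw [czt, cee]
      ext x
      constructor
      · rintro (hx | hx | hx)
        · exact hx.1
        · exact hqp (hzq hx)
        · exact (hZsub hx).1
      · intro hx
        by_cases hxZ : x ∈ ZS
        · exact Or.inr (Or.inr hxZ)
        · exact Or.inl ⟨hx, hxZ⟩)
    (by -- h7 : zt ∩ ee = z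
      rw [czt, cee]
      ext x
      constructor
      · rintro ⟨⟨hxp, hxZ⟩, hx | hx⟩
        · exact hx
        · exact absurd hx hxZ
      · intro hx
        exact ⟨⟨hqp (hzq hx), fun h => (hZsub h).2 hx⟩, Or.inl hx⟩)
    (by -- h8 : z ⊆ zt
      rw [czt]
      intro x hx
      exact ⟨hqp (hzq hx), fun h => (hZsub h).2 hx⟩)
    (by rw [cz₀]; exact Set.inter_subset_left) -- h9
    (by -- h10 : q₀ ∪ zt = q
      rw [cq₀, czt]
      ext x
      constructor
      · rintro (hx | hx)
        · exact hx.1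
        · exact hztq hx
      · intro hx
        by_cases hxZ : x ∈ ZS
        · exact Or.inl ⟨hx, hZqq' ⟨hxZ, hx⟩⟩
        · exact Or.inr ⟨hqp hx, hxZ⟩)
    (by -- h11 : p₀ ∪ zt = p
      rw [cp₀, czt]
      ext x
      constructor
      · rintro (hx | hx)
        · exact hx.1
        · exact hx.1
      · intro hx
        by_cases hxZ : x ∈ ZS
        · exact Or.inl ⟨hx, (hZsub' hxZ).1⟩
        · exact Or.inr ⟨hx, hxZ⟩)
    (by -- h12 : b₀ ∪ zt = bt
      rw [cb₀, czt, cbt, cbt']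
      ext x
      constructor
      · rintro (⟨hx, _⟩ | hx)
        · exact hx
        · exact Or.inl (hztq hx)
      · rintro (hx | hx)
        · by_cases hxZ : x ∈ ZS
          · exact Or.inl ⟨Or.inl hx, Or.inl (hZqq' ⟨hxZ, hx⟩)⟩
          · exact Or.inr ⟨hqp hx, hxZ⟩
        · exact Or.inl ⟨Or.inr hx, Or.inr hx⟩)
    (by -- h13 : zt ∩ p₀ = z₀
      rw [czt, cp₀, cz₀, czt, czt']
      ext x
      constructor
      · rintro ⟨⟨hxp, hxZ⟩, _, hxp'⟩
        exact ⟨⟨hxp, hxZ⟩, hxp', hxZ⟩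
      · rintro ⟨⟨hxp, hxZ⟩, hxp', _⟩
        exact ⟨⟨hxp, hxZ⟩, hxp, hxp'⟩)
    (by -- h14 : b₀ ∩ zt = z₀
      rw [cb₀, czt, cz₀, czt, czt', cbt, cbt']
      ext x
      constructor
      · rintro ⟨⟨_, hx' | hx'⟩, hxp, hxZ⟩
        · exact ⟨⟨hxp, hxZ⟩, hqp' hx', hxZ⟩
        · exact absurd (hztq ⟨hxp, hxZ⟩) (hBnq x hx')
      · rintro ⟨⟨hxp, hxZ⟩, hxp', _⟩
        exact ⟨⟨Or.inl (hztq ⟨hxp, hxZ⟩), Or.inl (hztq' ⟨hxp', hxZ⟩)⟩, hxp, hxZ⟩)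
    (by -- h15 : z₀ ⊆ q₀
      rw [cz₀, cq₀, czt, czt']
      rintro x ⟨hx, hx'⟩
      exact ⟨hztq hx, hztq' hx'⟩)
    (by -- h16 : q₀ ⊆ b₀
      rw [cq₀, cb₀, cbt, cbt']
      rintro x ⟨hx, hx'⟩
      exact ⟨Or.inl hx, Or.inl hx'⟩)
    (by -- h17 : p₀ ⊆ b₀
      rw [cp₀, cb₀, cbt, cbt']
      rintro x ⟨hx, hx'⟩
      constructor
      · by_cases hq2 : x ∈ (↑q : Set _)
        · exact Or.inl hq2
        · exact Or.inr (hpqB ⟨hx, hq2⟩)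
      · by_cases hq2 : x ∈ (↑q' : Set _)
        · exact Or.inl hq2
        · exact Or.inr (hpqB' ⟨hx', hq2⟩))
  obtain ⟨g'⟩ := sideIso d F hmono hsub hinf hsup z' q' p' b' zt' bt' z₀ q₀ p₀ b₀ c' ee'
    (by -- h1' : p' ⊆ bt'
      intro x hx
      rw [cbt']
      by_cases hq2 : x ∈ (↑q' : Set (Fin n → ZBar))
      · exact Or.inl hq2
      · exact Or.inr (hpqB' ⟨hx, hq2⟩))
    (by -- h2' : bt' ∪ c' = b'
      rw [cbt', cc']
      ext x
      constructor
      · rintro ((hx | hx) | hx)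
        · exact hpb' (hqp' hx)
        · exact (hBsub' hx).1
        · exact hx.1
      · intro hx
        by_cases hxB : x ∈ BS
        · exact Or.inl (Or.inr hxB)
        · exact Or.inr ⟨hx, hxB⟩)
    (by -- h3' : bt' ∩ c' = q'
      rw [cbt', cc']
      ext x
      constructor
      · rintro ⟨hx | hx, hb2, hnB⟩
        · exact hx
        · exact absurd hx hnB
      · intro hx
        exact ⟨Or.inl hx, hpb' (hqp' hx), fun h => hBnq' x h hx⟩)
    hztq'
    (by -- h5' : ee' ⊆ p'
      rw [cee']
      rintro x (hx | hx)
      · exact hqp' (hzq' hx)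
      · exact (hZsub' hx).1)
    (by -- h6' : zt' ∪ ee' = p'
      rw [czt', cee']
      ext x
      constructor
      · rintro (hx | hx | hx)
        · exact hx.1
        · exact hqp' (hzq' hx)
        · exact (hZsub' hx).1
      · intro hx
        by_cases hxZ : x ∈ ZS
        · exact Or.inr (Or.inr hxZ)
        · exact Or.inl ⟨hx, hxZ⟩)
    (by -- h7' : zt' ∩ ee' = z'
      rw [czt', cee']
      ext x
      constructor
      · rintro ⟨⟨hxp, hxZ⟩, hx | hx⟩
        · exact hx
        · exact absurd hx hxZ
      · intro hx
        exact ⟨⟨hqp' (hzq' hx), fun h => (hZsub' h).2 hx⟩, Or.inl hx⟩)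
    (by -- h8' : z' ⊆ zt'
      rw [czt']
      intro x hx
      exact ⟨hqp' (hzq' hx), fun h => (hZsub' h).2 hx⟩)
    (by rw [cz₀]; exact Set.inter_subset_right) -- h9'
    (by -- h10' : q₀ ∪ zt' = q'
      rw [cq₀, czt']
      ext x
      constructor
      · rintro (hx | hx)
        · exact hx.2
        · exact hztq' hx
      · intro hx
        by_cases hxZ : x ∈ ZS
        · exact Or.inl ⟨hZq'q ⟨hxZ, hx⟩, hx⟩
        · exact Or.inr ⟨hqp' hx, hxZ⟩)
    (by -- h11' : p₀ ∪ zt' = p'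
      rw [cp₀, czt']
      ext x
      constructor
      · rintro (hx | hx)
        · exact hx.2
        · exact hx.1
      · intro hx
        by_cases hxZ : x ∈ ZS
        · exact Or.inl ⟨(hZsub hxZ).1, hx⟩
        · exact Or.inr ⟨hx, hxZ⟩)
    (by -- h12' : b₀ ∪ zt' = bt'
      rw [cb₀, czt', cbt, cbt']
      ext x
      constructor
      · rintro (⟨_, hx⟩ | hx)
        · exact hx
        · exact Or.inl (hztq' hx)
      · rintro (hx | hx)
        · by_cases hxZ : x ∈ ZS
          · exact Or.inl ⟨Or.inl (hZq'q ⟨hxZ, hx⟩), Or.inl hx⟩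
          · exact Or.inr ⟨hqp' hx, hxZ⟩
        · exact Or.inl ⟨Or.inr hx, Or.inr hx⟩)
    (by -- h13' : zt' ∩ p₀ = z₀
      rw [czt', cp₀, cz₀, czt, czt']
      ext x
      constructor
      · rintro ⟨⟨hxp', hxZ⟩, hxp, _⟩
        exact ⟨⟨hxp, hxZ⟩, hxp', hxZ⟩
      · rintro ⟨⟨hxp, hxZ⟩, hxp', _⟩
        exact ⟨⟨hxp', hxZ⟩, hxp, hxp'⟩)
    (by -- h14' : b₀ ∩ zt' = z₀
      rw [cb₀, czt', cz₀, czt, czt', cbt, cbt']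
      ext x
      constructor
      · rintro ⟨⟨hx1 | hx1, _⟩, hxp', hxZ⟩
        · exact ⟨⟨hqp hx1, hxZ⟩, hxp', hxZ⟩
        · exact absurd (hztq' ⟨hxp', hxZ⟩) (hBnq' x hx1)
      · rintro ⟨⟨hxp, hxZ⟩, hxp', _⟩
        exact ⟨⟨Or.inl (hztq ⟨hxp, hxZ⟩), Or.inl (hztq' ⟨hxp', hxZ⟩)⟩, hxp', hxZ⟩)
    (by -- h15 : z₀ ⊆ q₀
      rw [cz₀, cq₀, czt, czt']
      rintro x ⟨hx, hx'⟩
      exact ⟨hztq hx, hztq' hx'⟩)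
    (by -- h16 : q₀ ⊆ b₀
      rw [cq₀, cb₀, cbt, cbt']
      rintro x ⟨hx, hx'⟩
      exact ⟨Or.inl hx, Or.inl hx'⟩)
    (by -- h17 : p₀ ⊆ b₀
      rw [cp₀, cb₀, cbt, cbt']
      rintro x ⟨hx, hx'⟩
      constructor
      · by_cases hq2 : x ∈ (↑q : Set (Fin n → ZBar))
        · exact Or.inl hq2
        · exact Or.inr (hpqB ⟨hx, hq2⟩)
      · by_cases hq2 : x ∈ (↑q' : Set (Fin n → ZBar))
        · exact Or.inl hq2
        · exact Or.inr (hpqB' ⟨hx', hq2⟩))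
  exact ⟨g.trans g'.symm⟩
end

section
/- Fix n ≥ 1 and Q = (q_1,…,q_n) ∈ ℤⁿ with all q_i ≥ 0. For every 1 ≤ k ≤ n: (a) V_k^Q = (φ_k^Q)^{−1}(W_k), where W_k := {Y ∈ ℤⁿ : y_i = 0 for 1 ≤ i ≤ n−k, and 0 ≤ y_{n−k+j} ≤ q_j for 1 ≤ j ≤ k}; (b) V_{k−1}^Q = (e_k − a_k^Q) − V_{k−1}^Q as sets, where A − V := {A − v : v ∈ V}; (c) V_k^Q is connected and equals the connected component containing 0 of the set {X ∈ ℤⁿ : 0 ≤lex φ_k^Q(X) ≤lex (0,…,0,q_1,…,q_k)} (the last vector having n−k leading zeros). -/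
/-- `A` is connected (in the comparability graph). -/
def IsConnSet {V : Type*} [Preorder V] (A : Set V) : Prop :=
  ∀ x ∈ A, ∀ y ∈ A, ReachIn A x y

/-- The connected component of `x₀` in `A`. -/
def connComp {V : Type*} [Preorder V] (A : Set V) (x₀ : V) : Set V :=
  {x | x ∈ A ∧ ReachIn A x₀ x}

/-- Lexicographic order on `ℤⁿ`. -/
def lexLe {n : ℕ} (x y : Fin n → ℤ) : Prop :=
  x = y ∨ ∃ i : Fin n, (∀ j : Fin n, j < i → x j = y j) ∧ x i < y i

/-- Standard basis vectors `e_k` of `ℤⁿ` (1-indexed). -/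
def stdE (n : ℕ) (k : ℤ) : Fin n → ℤ := fun i =>
  if ((i : ℕ) : ℤ) + 1 = k then 1 else 0

/-- `q_i` (1-indexed entry of `Q`), with `qval = 0` for indices out of range. -/
def qval (n : ℕ) (Q : Fin n → ℤ) (i : ℕ) : ℤ :=
  if h : 1 ≤ i ∧ i - 1 < n then Q ⟨i - 1, h.2⟩ else 0

/-- The unimodular automorphism
`φ_k^Q(X) = (x_{k+1},…,x_n, x_1 + q_1(x_2+⋯+x_k), …, x_{k−1} + q_{k−1}x_k, x_k)`
(written for 0-indexed coordinates). -/
def phiQ (n k : ℕ) (Q X : Fin n → ℤ) : Fin n → ℤ := fun j =>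
  if h : (j : ℕ) + k < n then X ⟨(j : ℕ) + k, h⟩
  else (∑ i : Fin n, if (i : ℕ) = (j : ℕ) + k - n then X i else 0) +
    qval n Q ((j : ℕ) + k - n + 1) *
      (∑ i : Fin n, if (j : ℕ) + k - n < (i : ℕ) ∧ (i : ℕ) < k then X i else 0)

/-- Auxiliary recursion: `aQaux k = (a_k, Σ_{i=1}^k q_i·a_i)`. -/
def aQaux (n : ℕ) (Q : Fin n → ℤ) : ℕ → (Fin n → ℤ) × (Fin n → ℤ)
  | 0 => (0, 0)
  | (k + 1) =>
    let s := (aQaux n Q k).2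
    let a := stdE n ((k : ℤ) + 1) - s
    (a, s + qval n Q (k + 1) • a)

/-- `a_k^Q = e_k − Σ_{i=1}^{k−1} q_i·a_i^Q`, with `a_0^Q = 0`. -/
def aQ (n : ℕ) (Q : Fin n → ℤ) (k : ℕ) : Fin n → ℤ := (aQaux n Q k).1

/-- `V_0^Q = {0}` and `V_k^Q = {j·a_k^Q + v : 0 ≤ j ≤ q_k, v ∈ V_{k−1}^Q}`. -/
def VQ (n : ℕ) (Q : Fin n → ℤ) : ℕ → Set (Fin n → ℤ)
  | 0 => {0}
  | (k + 1) => {X | ∃ j : ℤ, 0 ≤ j ∧ j ≤ qval n Q (k + 1) ∧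
      ∃ v ∈ VQ n Q k, X = j • aQ n Q (k + 1) + v}

/-!
`φ_k` maps `a_s` (`1 ≤ s ≤ k`) to `e_{n-k+s}`: indeed
`φ_k(e_s) = e_{n-k+s} + Σ_{i<s} q_i e_{n-k+i}`, and `φ_k(Σ_{i<s} q_i a_i)` is the same sum by
induction. Since `φ_k` is injective, `V_k` is the preimage of the box
`W_k = [0, (0,…,0,q_1,…,q_k)]`. For (b), `e_k - a_k = Σ_{i<k} q_i a_i`, and `V_{k-1}` is invariant
under `v ↦ Σ_{i<k} q_i a_i - v` (replace each coefficient `j` of `a_i` by `q_i - j`).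

`V_k` is connected: each slab `j a_k + V_{k-1}` is connected by induction, and consecutive slabs
are joined by the comparable pair `(j+1) a_k + (e_k - a_k) ≥ j a_k`.

For the component, let `d ≥ 0`. Then `φ_k(d) ≥ 0`, and as soon as one coordinate of `φ_k(d)` is
positive, every earlier coordinate is at least the corresponding one of the corner
`(0,…,0,q_1,…,q_k)`. Hence if `X` is comparable to a point of `V_k` and `φ_k(X)` lies
lexicographically between `0` and the corner, then `φ_k(X)` lies in the box, i.e. `X ∈ V_k`.
-/

namespace ReachIn

variable {V W : Type*} [Preorder V] [Preorder W] {A : Set V} {a b : V}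

theorem symm (h : ReachIn A a b) : ReachIn A b a := by
  induction h with
  | refl => exact .refl
  | tail _ hstep ih => exact .head ⟨hstep.2.1, hstep.1, hstep.2.2.symm⟩ ih

theorem map {B : Set W} {f : V → W} (hf : Monotone f) (hAB : Set.MapsTo f A B)
    (h : ReachIn A a b) : ReachIn B (f a) (f b) := by
  induction h with
  | refl => exact .refl
  | tail _ hstep ih =>
    exact ih.tail ⟨hAB hstep.1, hAB hstep.2.1, hstep.2.2.imp (fun h => hf h) (fun h => hf h)⟩

theorem mono {B : Set V} (hAB : A ⊆ B) (h : ReachIn A a b) : ReachIn B a b :=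
  h.map monotone_id hAB

end ReachIn

theorem connComp_eq {V : Type*} [Preorder V] {A S : Set V} {x₀ : V} (hSA : S ⊆ A)
    (hx₀ : x₀ ∈ S) (hS : IsConnSet S)
    (hclosed : ∀ a ∈ S, ∀ b ∈ A, a ≤ b ∨ b ≤ a → b ∈ S) : connComp A x₀ = S := by
  ext x
  refine ⟨fun hx => ?_, fun hx => ⟨hSA hx, (hS x₀ hx₀ x hx).mono hSA⟩⟩
  obtain ⟨-, hx⟩ := hx
  induction hx with
  | refl => exact hx₀
  | tail _ hstep ih => exact hclosed _ ih _ hstep.2.1 hstep.2.2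

section Lex

variable {n : ℕ} {x y c : Fin n → ℤ}

theorem lexLe_iff_toLex_le : lexLe x y ↔ toLex x ≤ toLex y := by
  rw [le_iff_eq_or_lt, toLex_inj]
  rfl

theorem lexLe_of_le (h : x ≤ y) : lexLe x y :=
  lexLe_iff_toLex_le.2 (Pi.toLex_monotone h)

theorem lexLe.neg (h : lexLe x y) : lexLe (-y) (-x) := by
  rcases h with rfl | ⟨i, hlt, hi⟩
  · exact .inl rfl
  · exact .inr ⟨i, fun j hj => by simp [hlt j hj], by simpa using hi⟩

theorem le_of_lexLe_of_gap (hyc : lexLe y c) (hxc : x ≤ c)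
    (hgap : ∀ i j, i < j → x j < y j → c i ≤ y i) : y ≤ c := by
  intro j
  by_contra! hj
  rcases hyc with rfl | ⟨i, hlt, hi⟩
  · exact lt_irrefl _ hj
  rcases lt_trichotomy j i with hji | rfl | hij
  · exact hj.ne' (hlt j hji)
  · exact hi.asymm hj
  · exact hi.not_ge (hgap i j hij ((hxc j).trans_lt hj))

theorem nonneg_of_lexLe_of_gap (hy : lexLe 0 y) (hx : 0 ≤ x)
    (hgap : ∀ i j, i < j → y j < x j → y i ≤ 0) : 0 ≤ y := by
  have := le_of_lexLe_of_gap (x := -x) (by simpa using hy.neg) (by simpa using hx)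
    (fun i j hij hj => by simpa using hgap i j hij (by simpa using hj))
  simpa using this

end Lex

theorem mem_Icc_add_single_iff {ι α : Type*} [DecidableEq ι] [AddCommGroup α] [PartialOrder α]
    [IsOrderedAddMonoid α] {c y : ι → α} {p : ι} {q : α} (hcp : c p = 0) :
    y ∈ Set.Icc 0 (c + Pi.single p q) ↔
      ∃ t, 0 ≤ t ∧ t ≤ q ∧ y - Pi.single p t ∈ Set.Icc 0 c := by
  constructor
  · rintro ⟨h0, hc⟩
    refine ⟨y p, h0 p, by simpa [hcp] using hc p, fun i => ?_, fun i => ?_⟩ <;>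
      rcases eq_or_ne i p with rfl | hi
    · simp
    · simpa [hi] using h0 i
    · simp [hcp]
    · simpa [hi] using hc i
  · rintro ⟨t, ht0, htq, h0, hc⟩
    have hyp : y p = t := by
      have := le_antisymm ((hc p).trans_eq hcp) (h0 p)
      simpa [sub_eq_zero] using this
    refine ⟨fun i => ?_, fun i => ?_⟩ <;> rcases eq_or_ne i p with rfl | hi
    · simpa [hyp] using ht0
    · simpa [hi] using h0 i
    · simpa [hyp, hcp] using htq
    · simpa [hi] using hc i

section Phi

variable {n k : ℕ} {Q X : Fin n → ℤ}

theorem qval_nonneg (hQ : ∀ i, 0 ≤ Q i) (i : ℕ) : 0 ≤ qval n Q i := by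
  unfold qval
  split <;> simp [hQ]

def phiQHom (n k : ℕ) (Q : Fin n → ℤ) : (Fin n → ℤ) →+ (Fin n → ℤ) where
  toFun := phiQ n k Q
  map_zero' := by funext j; simp [phiQ]
  map_add' X Y := by
    funext j
    simp only [phiQ, Pi.add_apply]
    split
    · rfl
    · simp only [ite_add_zero, Finset.sum_add_distrib]
      ring

theorem phiQ_add (X Y : Fin n → ℤ) : phiQ n k Q (X + Y) = phiQ n k Q X + phiQ n k Q Y :=
  map_add (phiQHom n k Q) X Y

theorem phiQ_sub (X Y : Fin n → ℤ) : phiQ n k Q (X - Y) = phiQ n k Q X - phiQ n k Q Y :=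
  map_sub (phiQHom n k Q) X Y

theorem phiQ_zsmul (t : ℤ) (X : Fin n → ℤ) : phiQ n k Q (t • X) = t • phiQ n k Q X :=
  map_zsmul (phiQHom n k Q) t X

theorem phiQ_apply_of_lt {j : Fin n} (h : (j : ℕ) + k < n) :
    phiQ n k Q X j = X ⟨(j : ℕ) + k, h⟩ :=
  dif_pos h

theorem phiQ_apply_of_le (hkn : k ≤ n) {j : Fin n} (h : n ≤ (j : ℕ) + k) :
    phiQ n k Q X j = X ⟨(j : ℕ) + k - n, by omega⟩ + qval n Q ((j : ℕ) + k - n + 1) *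
      ∑ i : Fin n, if (j : ℕ) + k - n < (i : ℕ) ∧ (i : ℕ) < k then X i else 0 := by
  rw [phiQ, dif_neg (by omega)]
  congr
  rw [Finset.sum_eq_single_of_mem ⟨(j : ℕ) + k - n, by omega⟩ (Finset.mem_univ _)
    (fun i _ hi => if_neg (by simpa [Fin.ext_iff] using hi)), if_pos rfl]

theorem phiQ_eq_zero_iff (hkn : k ≤ n) : phiQ n k Q X = 0 ↔ X = 0 := by
  refine ⟨fun h => ?_, fun h => h ▸ map_zero (phiQHom n k Q)⟩
  suffices ∀ t, ∀ i : Fin n, n ≤ (i : ℕ) + t → X i = 0 from funext fun i => this n i (by omega)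
  intro t
  induction t with
  | zero => intro i hi; omega
  | succ t ih =>
    intro i hi
    by_cases hit : n ≤ (i : ℕ) + t
    · exact ih i hit
    rcases lt_or_ge (i : ℕ) k with hik | hik
    · have hφ := congrFun h ⟨n - k + i, by omega⟩
      rw [phiQ_apply_of_le hkn (by dsimp only; omega), Finset.sum_eq_zero, mul_zero, add_zero] at hφ
      · simpa [show n - k + (i : ℕ) + k - n = i by omega] using hφ
      · intro l _
        split_ifs with hl
        · exact ih l (by dsimp only at hl; omega)
        · rfl
    · have hφ := congrFun h ⟨i - k, by omega⟩
      rw [phiQ_apply_of_lt (by dsimp only; omega)] at hφ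
      simpa [show (i : ℕ) - k + k = i by omega] using hφ

theorem phiQ_nonneg (hQ : ∀ i, 0 ≤ Q i) (hX : 0 ≤ X) : 0 ≤ phiQ n k Q X := by
  have hsum : ∀ P : Fin n → Prop, [DecidablePred P] → 0 ≤ ∑ i, if P i then X i else 0 :=
    fun P _ => Finset.sum_nonneg fun i _ => by split; exacts [hX i, le_rfl]
  intro j
  unfold phiQ
  split
  · exact hX _
  · exact add_nonneg (hsum _) (mul_nonneg (qval_nonneg hQ _) (hsum _))

theorem exists_ne_zero_of_phiQ_ne_zero {j : Fin n} (h : n ≤ (j : ℕ) + k)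
    (hj : phiQ n k Q X j ≠ 0) : ∃ l : Fin n, (j : ℕ) + k - n ≤ l ∧ (l : ℕ) < k ∧ X l ≠ 0 := by
  by_contra! hX
  refine hj ?_
  rw [phiQ, dif_neg (by omega), Finset.sum_eq_zero, Finset.sum_eq_zero, mul_zero, add_zero] <;>
    intro l _ <;> split_ifs with hl <;> first | rfl | exact hX l (by omega) (by omega)

/-- `(0,…,0,q_1,…,q_s,0,…,0)` with `q_1` in (0-indexed) position `n - k`; for `s = k` this is the
upper corner of the box `W_k`. -/
def capQ (n k : ℕ) (Q : Fin n → ℤ) (s : ℕ) : Fin n → ℤ := fun j =>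
  if n ≤ (j : ℕ) + k ∧ (j : ℕ) + k < n + s then qval n Q ((j : ℕ) + k - n + 1) else 0

theorem capQ_zero : capQ n k Q 0 = 0 := by
  funext j
  simp [capQ]

theorem capQ_self : capQ n k Q k =
    fun j : Fin n => if (j : ℕ) + k < n then 0 else qval n Q ((j : ℕ) + k - n + 1) := by
  funext j
  have := j.isLt
  simp only [capQ]
  split_ifs <;> first | rfl | omega

theorem preimage_Icc_capQ_self : phiQ n k Q ⁻¹' Set.Icc 0 (capQ n k Q k) = {X | ∀ j : Fin n,
    ((j : ℕ) + k < n → phiQ n k Q X j = 0) ∧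
    (n ≤ (j : ℕ) + k → 0 ≤ phiQ n k Q X j ∧ phiQ n k Q X j ≤ qval n Q ((j : ℕ) + k - n + 1))} := by
  ext X
  simp only [capQ_self, Set.mem_preimage, Set.mem_Icc, Pi.le_def, Set.mem_ofPred_eq, ← forall_and]
  refine forall_congr' fun j => ?_
  by_cases hj : (j : ℕ) + k < n
  · simp [hj, le_antisymm_iff, and_comm]
  · simp [hj, le_of_not_gt hj]

theorem capQ_apply_tail (hkn : k ≤ n) {s : ℕ} (hs : s < k) :
    capQ n k Q s ⟨n - k + s, by omega⟩ = 0 := by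
  simp only [capQ, ite_eq_right_iff, and_imp]
  omega

theorem capQ_succ (hkn : k ≤ n) {s : ℕ} (hs : s < k) :
    capQ n k Q (s + 1) = capQ n k Q s + Pi.single ⟨n - k + s, by omega⟩ (qval n Q (s + 1)) := by
  funext j
  simp only [capQ, Pi.add_apply, Pi.single_apply, Fin.ext_iff]
  split_ifs <;> (try simp only [add_zero, zero_add]) <;> first | rfl | omega | (congr 1; omega)

theorem capQ_le_phiQ_of_lt (hQ : ∀ i, 0 ≤ Q i) (hX : 0 ≤ X) {i j : Fin n} (hij : i < j)
    (hj : 0 < phiQ n k Q X j) : capQ n k Q k i ≤ phiQ n k Q X i := by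
  unfold capQ
  split_ifs with hi
  · have hjk : n ≤ (j : ℕ) + k := by have := Fin.lt_def.1 hij; omega
    obtain ⟨l, hjl, hlk, hl⟩ := exists_ne_zero_of_phiQ_ne_zero hjk hj.ne'
    have hil : (i : ℕ) + k - n < l := by have := Fin.lt_def.1 hij; omega
    have hXl : 1 ≤ X l := by have : 0 ≤ X l := hX l; omega
    have hsum : X l ≤ ∑ l' : Fin n, if (i : ℕ) + k - n < (l' : ℕ) ∧ (l' : ℕ) < k then X l' else 0 :=
      (if_pos ⟨hil, hlk⟩).symm.trans_le <| Finset.single_le_sum (f := fun l' : Fin n =>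
        if (i : ℕ) + k - n < (l' : ℕ) ∧ (l' : ℕ) < k then X l' else 0)
          (fun l' _ => by split; exacts [hX l', le_rfl]) (Finset.mem_univ l)
    have h0 : 0 ≤ ∑ l' : Fin n, if (l' : ℕ) = (i : ℕ) + k - n then X l' else 0 :=
      Finset.sum_nonneg fun l' _ => by split; exacts [hX l', le_rfl]
    rw [phiQ, dif_neg (by omega)]
    nlinarith [mul_le_mul_of_nonneg_left (hXl.trans hsum) (qval_nonneg hQ ((i : ℕ) + k - n + 1))]
  · exact phiQ_nonneg hQ hX i

end Phi

section AQ

variable {n k : ℕ} {Q : Fin n → ℤ}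

/-- `Σ_{i=1}^s q_i a_i`, so that `a_{s+1} = e_{s+1} - qaSum s`. -/
def qaSum (n : ℕ) (Q : Fin n → ℤ) (s : ℕ) : Fin n → ℤ := (aQaux n Q s).2

theorem aQ_succ (s : ℕ) : aQ n Q (s + 1) = stdE n ((s : ℤ) + 1) - qaSum n Q s := rfl

theorem qaSum_succ (s : ℕ) :
    qaSum n Q (s + 1) = qaSum n Q s + qval n Q (s + 1) • aQ n Q (s + 1) := rfl

theorem stdE_succ {s : ℕ} (hs : s < n) : stdE n ((s : ℤ) + 1) = Pi.single ⟨s, hs⟩ 1 := by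
  funext i
  simp [stdE, Pi.single_apply, Fin.ext_iff]

theorem stdE_nonneg (n : ℕ) (z : ℤ) : 0 ≤ stdE n z := fun i => by
  unfold stdE
  split <;> simp

theorem stdE_sub_aQ (k : ℕ) : stdE n k - aQ n Q k = qaSum n Q (k - 1) := by
  cases k with
  | zero =>
    have : stdE n ((0 : ℕ) : ℤ) = 0 := funext fun i => if_neg (by omega)
    rw [this]
    rfl
  | succ k => simp [aQ_succ]

theorem phiQ_stdE_succ (hkn : k ≤ n) {s : ℕ} (hs : s < k) :
    phiQ n k Q (stdE n ((s : ℤ) + 1)) = Pi.single ⟨n - k + s, by omega⟩ 1 + capQ n k Q s := by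
  funext j
  rw [stdE_succ (by omega)]
  by_cases hj : (j : ℕ) + k < n
  · rw [phiQ_apply_of_lt hj]
    simp only [Pi.single_apply, Fin.ext_iff, Pi.add_apply, capQ]
    omega
  · rw [phiQ, dif_neg hj, ← Finset.sum_filter, ← Finset.sum_filter, Finset.sum_pi_single',
      Finset.sum_pi_single']
    simp only [Finset.mem_filter, Finset.mem_univ, true_and, mul_ite, mul_one, mul_zero,
      Pi.add_apply, Pi.single_apply, Fin.ext_iff, capQ]
    split_ifs <;> omega

theorem phiQ_qaSum (hkn : k ≤ n) {s : ℕ} (hs : s ≤ k) :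
    phiQ n k Q (qaSum n Q s) = capQ n k Q s := by
  induction s with
  | zero => exact (phiQ_eq_zero_iff hkn).2 rfl |>.trans capQ_zero.symm
  | succ s ih =>
    rw [qaSum_succ, phiQ_add, phiQ_zsmul, aQ_succ, phiQ_sub, phiQ_stdE_succ hkn hs, ih (by omega),
      capQ_succ hkn hs, add_sub_cancel_right, ← Pi.single_smul, smul_eq_mul, mul_one]

theorem phiQ_aQ_succ (hkn : k ≤ n) {s : ℕ} (hs : s < k) :
    phiQ n k Q (aQ n Q (s + 1)) = Pi.single ⟨n - k + s, by omega⟩ 1 := by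
  rw [aQ_succ, phiQ_sub, phiQ_stdE_succ hkn hs, phiQ_qaSum hkn hs.le, add_sub_cancel_right]

end AQ

section VQ

variable {n k : ℕ} {Q X : Fin n → ℤ}

theorem mem_VQ_succ_iff {s : ℕ} : X ∈ VQ n Q (s + 1) ↔
    ∃ t, 0 ≤ t ∧ t ≤ qval n Q (s + 1) ∧ X - t • aQ n Q (s + 1) ∈ VQ n Q s := by
  constructor
  · rintro ⟨t, h0, hq, v, hv, rfl⟩
    exact ⟨t, h0, hq, by simpa using hv⟩
  · rintro ⟨t, h0, hq, hv⟩
    exact ⟨t, h0, hq, _, hv, by abel⟩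

theorem VQ_eq_preimage_Icc (hkn : k ≤ n) {s : ℕ} (hs : s ≤ k) :
    VQ n Q s = phiQ n k Q ⁻¹' Set.Icc 0 (capQ n k Q s) := by
  induction s with
  | zero =>
    ext X
    simp [VQ, capQ_zero, phiQ_eq_zero_iff hkn]
  | succ s ih =>
    ext X
    rw [mem_VQ_succ_iff, Set.mem_preimage, capQ_succ hkn hs,
      mem_Icc_add_single_iff (capQ_apply_tail hkn hs)]
    simp only [ih (by omega), Set.mem_preimage, phiQ_sub, phiQ_zsmul, phiQ_aQ_succ hkn hs,
      ← Pi.single_smul', smul_eq_mul, mul_one]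

theorem zero_mem_VQ (hQ : ∀ i, 0 ≤ Q i) (s : ℕ) : (0 : Fin n → ℤ) ∈ VQ n Q s := by
  induction s with
  | zero => rfl
  | succ s ih => exact ⟨0, le_rfl, qval_nonneg hQ _, 0, ih, by simp⟩

theorem qaSum_mem_VQ (hQ : ∀ i, 0 ≤ Q i) (s : ℕ) : qaSum n Q s ∈ VQ n Q s := by
  induction s with
  | zero => rfl
  | succ s ih => exact ⟨_, qval_nonneg hQ _, le_rfl, _, ih, by rw [qaSum_succ, add_comm]⟩

theorem qaSum_sub_mem_VQ {s : ℕ} {v : Fin n → ℤ} (hv : v ∈ VQ n Q s) :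
    qaSum n Q s - v ∈ VQ n Q s := by
  induction s generalizing v with
  | zero => simp_all [VQ, qaSum, aQaux]
  | succ s ih =>
    obtain ⟨t, h0, hq, w, hw, rfl⟩ := hv
    refine ⟨qval n Q (s + 1) - t, by omega, by omega, _, ih hw, ?_⟩
    rw [qaSum_succ, sub_smul]
    abel

theorem image_qaSum_sub_VQ (s : ℕ) : (qaSum n Q s - ·) '' VQ n Q s = VQ n Q s :=
  Set.Subset.antisymm (Set.image_subset_iff.2 fun _ => qaSum_sub_mem_VQ)
    fun _ hv => ⟨_, qaSum_sub_mem_VQ hv, sub_sub_cancel _ _⟩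

theorem reachIn_add_smul_aQ {s : ℕ} (ih : ∀ X ∈ VQ n Q s, ReachIn (VQ n Q s) X 0) {t : ℤ}
    (h0 : 0 ≤ t) (hq : t ≤ qval n Q (s + 1)) {v : Fin n → ℤ} (hv : v ∈ VQ n Q s) :
    ReachIn (VQ n Q (s + 1)) (t • aQ n Q (s + 1) + v) (t • aQ n Q (s + 1)) := by
  simpa using (ih v hv).map (B := VQ n Q (s + 1)) (f := (t • aQ n Q (s + 1) + ·))
    (fun _ _ h => (add_le_add_iff_left _).2 h) (fun w hw => ⟨t, h0, hq, w, hw, rfl⟩)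

theorem reachIn_smul_aQ (hQ : ∀ i, 0 ≤ Q i) {s : ℕ}
    (ih : ∀ X ∈ VQ n Q s, ReachIn (VQ n Q s) X 0) {t : ℤ} (h0 : 0 ≤ t) :
    t ≤ qval n Q (s + 1) → ReachIn (VQ n Q (s + 1)) (t • aQ n Q (s + 1)) 0 := by
  induction t, h0 using Int.leInduction with
  | base => intro _; rw [zero_smul]; exact .refl
  | succ t h0 iht =>
    intro hq
    have hS := qaSum_mem_VQ hQ s
    have hstep : StepIn (VQ n Q (s + 1))
        ((t + 1) • aQ n Q (s + 1) + qaSum n Q s) (t • aQ n Q (s + 1)) := by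
      refine ⟨⟨t + 1, by omega, hq, _, hS, rfl⟩, ⟨t, h0, by omega, 0, zero_mem_VQ hQ s, by simp⟩,
        .inr ?_⟩
      rw [add_smul, one_smul, add_assoc, aQ_succ, sub_add_cancel]
      exact le_add_of_nonneg_right (stdE_nonneg n _)
    exact ((reachIn_add_smul_aQ ih (by omega) hq hS).symm.tail hstep).trans (iht (by omega))

theorem reachIn_VQ_zero (hQ : ∀ i, 0 ≤ Q i) (s : ℕ) :
    ∀ X ∈ VQ n Q s, ReachIn (VQ n Q s) X 0 := by
  induction s with
  | zero => rintro X rfl; exact .refl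
  | succ s ih =>
    rintro X ⟨t, h0, hq, v, hv, rfl⟩
    exact (reachIn_add_smul_aQ ih h0 hq hv).trans (reachIn_smul_aQ hQ ih h0 hq)

theorem isConnSet_VQ (hQ : ∀ i, 0 ≤ Q i) (s : ℕ) : IsConnSet (VQ n Q s) := fun x hx y hy =>
  (reachIn_VQ_zero hQ s x hx).trans (reachIn_VQ_zero hQ s y hy).symm

theorem mem_VQ_of_comparable (hQ : ∀ i, 0 ≤ Q i) (hkn : k ≤ n)
    {a b : Fin n → ℤ} (ha : a ∈ VQ n Q k) (hb0 : lexLe 0 (phiQ n k Q b))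
    (hbc : lexLe (phiQ n k Q b) (capQ n k Q k)) (hab : a ≤ b ∨ b ≤ a) : b ∈ VQ n Q k := by
  rw [VQ_eq_preimage_Icc hkn le_rfl] at ha ⊢
  obtain ⟨ha0, hac⟩ := ha
  rcases hab with hab | hba
  · have hd : 0 ≤ b - a := sub_nonneg.2 hab
    have hle : phiQ n k Q a ≤ phiQ n k Q b := sub_nonneg.1 (phiQ_sub b a ▸ phiQ_nonneg hQ hd)
    refine ⟨ha0.trans hle, le_of_lexLe_of_gap hbc hac fun i j hij hj => ?_⟩
    have h := capQ_le_phiQ_of_lt hQ hd hij (by simpa [phiQ_sub] using hj)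
    have := ha0 i
    simp only [phiQ_sub, Pi.sub_apply, Pi.zero_apply] at h this
    linarith
  · have hd : 0 ≤ a - b := sub_nonneg.2 hba
    have hle : phiQ n k Q b ≤ phiQ n k Q a := sub_nonneg.1 (phiQ_sub a b ▸ phiQ_nonneg hQ hd)
    refine ⟨nonneg_of_lexLe_of_gap hb0 ha0 fun i j hij hj => ?_, hle.trans hac⟩
    have h := capQ_le_phiQ_of_lt hQ hd hij (by simpa [phiQ_sub] using hj)
    have := hac i
    simp only [phiQ_sub, Pi.sub_apply] at h
    linarith

end VQ

theorem statement8_general (n : ℕ) (Q : Fin n → ℤ) (hQ : ∀ i, 0 ≤ Q i)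
    (k : ℕ) (hkn : k ≤ n) :
    VQ n Q k = {X | ∀ j : Fin n,
        ((j : ℕ) + k < n → phiQ n k Q X j = 0) ∧
        (n ≤ (j : ℕ) + k → 0 ≤ phiQ n k Q X j ∧
          phiQ n k Q X j ≤ qval n Q ((j : ℕ) + k - n + 1))} ∧
    VQ n Q (k - 1) = (fun v => (stdE n (k : ℤ) - aQ n Q k) - v) '' VQ n Q (k - 1) ∧
    IsConnSet (VQ n Q k) ∧
    VQ n Q k = connComp {X | lexLe 0 (phiQ n k Q X) ∧
      lexLe (phiQ n k Q X)
        (fun j => if (j : ℕ) + k < n then 0 else qval n Q ((j : ℕ) + k - n + 1))} 0 := by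
  have hV : VQ n Q k = phiQ n k Q ⁻¹' Set.Icc 0 (capQ n k Q k) := VQ_eq_preimage_Icc hkn le_rfl
  refine ⟨hV.trans preimage_Icc_capQ_self, by rw [stdE_sub_aQ, image_qaSum_sub_VQ],
    isConnSet_VQ hQ k, ?_⟩
  rw [← capQ_self]
  refine (connComp_eq (fun X hX => ?_) (zero_mem_VQ hQ k) (isConnSet_VQ hQ k)
    fun a ha b hb hab => mem_VQ_of_comparable hQ hkn ha hb.1 hb.2 hab).symm
  rw [hV] at hX
  exact ⟨lexLe_of_le hX.1, lexLe_of_le hX.2⟩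

/-- (a) `V_k^Q = (φ_k^Q)⁻¹(W_k)`; (b) `V_{k−1}^Q = (e_k − a_k^Q) − V_{k−1}^Q`;
(c) `V_k^Q` is connected and equals the connected component of `0` in
`{X : 0 ≤lex φ_k^Q(X) ≤lex (0,…,0,q_1,…,q_k)}`. -/
theorem statement8 (n : ℕ) (hn : 1 ≤ n) (Q : Fin n → ℤ) (hQ : ∀ i, 0 ≤ Q i)
    (k : ℕ) (hk1 : 1 ≤ k) (hkn : k ≤ n) :
    VQ n Q k = {X | ∀ j : Fin n,
        ((j : ℕ) + k < n → phiQ n k Q X j = 0) ∧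
        (n ≤ (j : ℕ) + k → 0 ≤ phiQ n k Q X j ∧
          phiQ n k Q X j ≤ qval n Q ((j : ℕ) + k - n + 1))} ∧
    VQ n Q (k - 1) = (fun v => (stdE n (k : ℤ) - aQ n Q k) - v) '' VQ n Q (k - 1) ∧
    IsConnSet (VQ n Q k) ∧
    VQ n Q k = connComp {X | lexLe 0 (phiQ n k Q X) ∧
      lexLe (phiQ n k Q X)
        (fun j => if (j : ℕ) + k < n then 0 else qval n Q ((j : ℕ) + k - n + 1))} 0 :=
  statement8_general n Q hQ k hkn
end

section
/- Let E be an exact couple system over a bounded poset I. Then for all p1 ≤ p2 ≤ p3 in I, the triangle E^{p2}_{p1} →(ℓ) E^{p3}_{p1} →(ℓ) E^{p3}_{p2} →(d) E^{p2}_{p1} is exact, where d := j_{p2,p1} ∘ k_{p3,p2}; that is, im(ℓ : E^{p2}_{p1} → E^{p3}_{p1}) = ker(ℓ : E^{p3}_{p1} → E^{p3}_{p2}), im(ℓ : E^{p3}_{p1} → E^{p3}_{p2}) = ker(d), and im(d) = ker(ℓ : E^{p2}_{p1} → E^{p3}_{p1}). -/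
open Function

universe u v

/-- An exact couple system over a bounded poset `I`: abelian groups `E^p_q` for `q ≤ p`,
functorial maps `ℓ`, boundary maps `k_{pq} : E^p_q → D_q` (where `D_p := E^p_⊥`), exact
triangles `D_q → D_p → E^p_q → D_q`, and naturality of `k`. -/
structure ExactCoupleSystem (I : Type u) [PartialOrder I] [BoundedOrder I] where
  /-- the abelian groups `E^p_q` -/
  E : ∀ p q : I, q ≤ p → AddCommGrpCat.{v}
  /-- the structure maps `ℓ : E^p_q → E^{p'}_{q'}` for `p ≤ p'`, `q ≤ q'` -/
  l : ∀ {p q p' q' : I} (h : q ≤ p) (h' : q' ≤ p'), p ≤ p' → q ≤ q' →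
      (E p q h →+ E p' q' h')
  /-- the boundary maps `k_{pq} : E^p_q → D_q` -/
  k : ∀ {p q : I} (h : q ≤ p), (E p q h →+ E q ⊥ bot_le)
  l_id : ∀ {p q : I} (h : q ≤ p), l h h le_rfl le_rfl = AddMonoidHom.id _
  l_comp : ∀ {p q p' q' p'' q'' : I} (h : q ≤ p) (h' : q' ≤ p') (h'' : q'' ≤ p'')
      (hp : p ≤ p') (hq : q ≤ q') (hp' : p' ≤ p'') (hq' : q' ≤ q''),
      (l h' h'' hp' hq').comp (l h h' hp hq) = l h h'' (hp.trans hp') (hq.trans hq')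
  exact_ij : ∀ {p q : I} (h : q ≤ p),
      (l (bot_le : (⊥ : I) ≤ q) (bot_le : (⊥ : I) ≤ p) h le_rfl).range =
        (l (bot_le : (⊥ : I) ≤ p) h le_rfl bot_le).ker
  exact_jk : ∀ {p q : I} (h : q ≤ p),
      (l (bot_le : (⊥ : I) ≤ p) h le_rfl bot_le).range = (k h).ker
  exact_ki : ∀ {p q : I} (h : q ≤ p),
      (k h).range = (l (bot_le : (⊥ : I) ≤ q) (bot_le : (⊥ : I) ≤ p) h le_rfl).ker
  k_nat : ∀ {p q p' q' : I} (h : q ≤ p) (h' : q' ≤ p') (hp : p ≤ p') (hq : q ≤ q'),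
      (l (bot_le : (⊥ : I) ≤ q) (bot_le : (⊥ : I) ≤ q') hq le_rfl).comp (k h) =
        (k h').comp (l h h' hp hq)

namespace ExactCoupleSystem

variable {I : Type u} [PartialOrder I] [BoundedOrder I] (X : ExactCoupleSystem.{u, v} I)

/-- `D_p := E^p_{−∞}`. -/
abbrev D (p : I) := X.E p ⊥ bot_le

/-- `i_{qp} : D_q → D_p`. -/
def i {q p : I} (h : q ≤ p) : X.D q →+ X.D p := X.l bot_le bot_le h le_rfl

/-- `j_{pq} : D_p → E^p_q`. -/
def j {q p : I} (h : q ≤ p) : X.D p →+ X.E p q h := X.l bot_le h le_rfl bot_le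

/-- The differential `d_{pqz} = j_{qz} ∘ k_{pq} : E^p_q → E^q_z`. -/
def dd {z q p : I} (hzq : z ≤ q) (hqp : q ≤ p) : X.E p q hqp →+ X.E q z hzq :=
  (X.j hzq).comp (X.k hqp)

/-- The S-term `S^{pz}_{bq} = ker(d_{pqz}) / im(d_{bpq})` of an exact couple system. -/
abbrev Sterm {z q p b : I} (hzq : z ≤ q) (hqp : q ≤ p) (hpb : p ≤ b) :=
  ↥(X.dd hzq hqp).ker ⧸ (X.dd hqp hpb).range.addSubgroupOf (X.dd hzq hqp).ker

/-- The class in `S^{pz}_{bq}` of an element `x ∈ ker(d_{pqz})`. -/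
def Scls {z q p b : I} (hzq : z ≤ q) (hqp : q ≤ p) (hpb : p ≤ b)
    {x : X.E p q hqp} (hx : x ∈ (X.dd hzq hqp).ker) : X.Sterm hzq hqp hpb :=
  QuotientAddGroup.mk ⟨x, hx⟩

end ExactCoupleSystem


/-!
The three exactness statements are diagram chases through the exact triangles
`D_q → D_p → E^p_q → D_q` of the couple, using functoriality of `ℓ`, naturality of `k`,
and the vanishing of `E^p_p` (so that any `ℓ : E^p_q → E^{p'}_{q'}` with `p ≤ q'` is zero).
-/

namespace ExactCoupleSystem

variable {I : Type u} [PartialOrder I] [BoundedOrder I] (X : ExactCoupleSystem.{u, v} I)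

section Functoriality

variable {p q p' q' p'' q'' : I} (h : q ≤ p) (h' : q' ≤ p') (h'' : q'' ≤ p'')

@[simp]
theorem l_self_apply (x : X.E p q h) : X.l h h le_rfl le_rfl x = x := by
  rw [X.l_id]
  rfl

@[simp]
theorem l_l_apply (hp : p ≤ p') (hq : q ≤ q') (hp' : p' ≤ p'') (hq' : q' ≤ q'')
    (x : X.E p q h) :
    X.l h' h'' hp' hq' (X.l h h' hp hq x) = X.l h h'' (hp.trans hp') (hq.trans hq') x :=
  DFunLike.congr_fun (X.l_comp h h' h'' hp hq hp' hq') x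

theorem k_l_apply (hp : p ≤ p') (hq : q ≤ q') (x : X.E p q h) :
    X.k h' (X.l h h' hp hq x) = X.i hq (X.k h x) :=
  (DFunLike.congr_fun (X.k_nat h h' hp hq) x).symm

theorem l_j_apply (hp : p ≤ p') (hq : q ≤ q') (x : X.D p) :
    X.l h h' hp hq (X.j h x) = X.j h' (X.i hp x) := by
  simp only [i, j, l_l_apply]

@[simp]
theorem i_self_apply (x : X.D p) : X.i (le_refl p) x = x :=
  X.l_self_apply bot_le x

theorem i_i_apply (hq : q ≤ p) (hp : p ≤ p') (x : X.D q) :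
    X.i hp (X.i hq x) = X.i (hq.trans hp) x :=
  X.l_l_apply _ _ _ hq le_rfl hp le_rfl x

end Functoriality

section Exactness

variable {p q : I} (h : q ≤ p)

theorem j_eq_zero_iff {x : X.D p} : X.j h x = 0 ↔ ∃ y, X.i h y = x :=
  (SetLike.ext_iff.mp (X.exact_ij h) x).symm

theorem k_eq_zero_iff {x : X.E p q h} : X.k h x = 0 ↔ ∃ y, X.j h y = x :=
  (SetLike.ext_iff.mp (X.exact_jk h) x).symm

theorem i_eq_zero_iff {x : X.D q} : X.i h x = 0 ↔ ∃ y, X.k h y = x :=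
  (SetLike.ext_iff.mp (X.exact_ki h) x).symm

@[simp]
theorem j_i_apply (x : X.D q) : X.j h (X.i h x) = 0 :=
  (X.j_eq_zero_iff h).2 ⟨x, rfl⟩

@[simp]
theorem i_k_apply (x : X.E p q h) : X.i h (X.k h x) = 0 :=
  (X.i_eq_zero_iff h).2 ⟨x, rfl⟩

end Exactness

theorem E_self_eq_zero {p : I} (h : p ≤ p) (x : X.E p p h) : x = 0 := by
  have hk : X.k h x = 0 := by simpa using X.i_k_apply h x
  obtain ⟨y, rfl⟩ := (X.k_eq_zero_iff h).1 hk
  simpa using X.j_i_apply h y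

theorem l_eq_zero_of_le {p q p' q' : I} (h : q ≤ p) (h' : q' ≤ p') (hp : p ≤ p') (hq : q ≤ q')
    (hpq' : p ≤ q') (x : X.E p q h) : X.l h h' hp hq x = 0 := by
  rw [← X.l_l_apply h le_rfl h' le_rfl h hp hpq',
    X.E_self_eq_zero le_rfl (X.l h le_rfl le_rfl h x), map_zero]

variable {p1 p2 p3 : I} (h12 : p1 ≤ p2) (h23 : p2 ≤ p3)

theorem range_l_eq_ker_l :
    (X.l h12 (h12.trans h23) h23 le_rfl).range = (X.l (h12.trans h23) h23 le_rfl h12).ker := by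
  have h13 := h12.trans h23
  ext x
  simp only [AddMonoidHom.mem_range, AddMonoidHom.mem_ker]
  constructor
  · rintro ⟨a, rfl⟩
    rw [l_l_apply]
    exact X.l_eq_zero_of_le _ _ _ _ le_rfl a
  · intro hx
    obtain ⟨a, ha⟩ := (X.i_eq_zero_iff h12).1 <| by
      rw [← X.k_l_apply h13 h23 le_rfl h12, hx, map_zero]
    have hk : X.k h13 (x - X.l h12 h13 h23 le_rfl a) = 0 := by
      rw [map_sub, X.k_l_apply, i_self_apply, ha, sub_self]
    obtain ⟨z, hz⟩ := (X.k_eq_zero_iff h13).1 hk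
    have hj : X.j h23 z = 0 := by
      rw [← X.i_self_apply z, ← X.l_j_apply h13 h23 le_rfl h12, hz, map_sub, hx, l_l_apply,
        X.l_eq_zero_of_le _ _ _ _ le_rfl, sub_zero]
    obtain ⟨w, rfl⟩ := (X.j_eq_zero_iff h23).1 hj
    refine ⟨a + X.j h12 w, ?_⟩
    rw [map_add, X.l_j_apply, hz, add_sub_cancel]

theorem range_l_eq_ker_dd :
    (X.l (h12.trans h23) h23 le_rfl h12).range = (X.dd h12 h23).ker := by
  have h13 := h12.trans h23
  ext x
  simp only [AddMonoidHom.mem_range, AddMonoidHom.mem_ker, dd, AddMonoidHom.comp_apply]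
  constructor
  · rintro ⟨b, rfl⟩
    rw [X.k_l_apply, j_i_apply]
  · intro hx
    obtain ⟨y, hy⟩ := (X.j_eq_zero_iff h12).1 hx
    have hi : X.i h13 y = 0 := by rw [← X.i_i_apply h12 h23, hy, i_k_apply]
    obtain ⟨b, hb⟩ := (X.i_eq_zero_iff h13).1 hi
    have hk : X.k h23 (x - X.l h13 h23 le_rfl h12 b) = 0 := by
      rw [map_sub, X.k_l_apply, hb, hy, sub_self]
    obtain ⟨z, hz⟩ := (X.k_eq_zero_iff h23).1 hk
    refine ⟨b + X.j h13 z, ?_⟩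
    rw [map_add, X.l_j_apply, i_self_apply, hz, add_sub_cancel]

theorem range_dd_eq_ker_l :
    (X.dd h12 h23).range = (X.l h12 (h12.trans h23) h23 le_rfl).ker := by
  have h13 := h12.trans h23
  ext a
  simp only [AddMonoidHom.mem_range, AddMonoidHom.mem_ker, dd, AddMonoidHom.comp_apply]
  constructor
  · rintro ⟨c, rfl⟩
    rw [X.l_j_apply, i_k_apply, map_zero]
  · intro ha
    obtain ⟨y, rfl⟩ := (X.k_eq_zero_iff h12).1 <| by
      rw [← X.i_self_apply (X.k h12 a), ← X.k_l_apply h12 h13 h23, ha, map_zero]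
    obtain ⟨u, hu⟩ := (X.j_eq_zero_iff h13).1 <| by rw [← X.l_j_apply h12 h13 h23 le_rfl, ha]
    have hi : X.i h23 (y - X.i h12 u) = 0 := by rw [map_sub, X.i_i_apply, hu, sub_self]
    obtain ⟨c, hc⟩ := (X.i_eq_zero_iff h23).1 hi
    exact ⟨c, by rw [hc, map_sub, j_i_apply, sub_zero]⟩

end ExactCoupleSystem

/-- Exact triangles: for `p1 ≤ p2 ≤ p3` the triangle
`E^{p2}_{p1} →(ℓ) E^{p3}_{p1} →(ℓ) E^{p3}_{p2} →(d) E^{p2}_{p1}` is exact, where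
`d := j_{p2,p1} ∘ k_{p3,p2}`. -/
theorem statement9 {I : Type u} [PartialOrder I] [BoundedOrder I]
    (X : ExactCoupleSystem.{u, v} I) {p1 p2 p3 : I} (h12 : p1 ≤ p2) (h23 : p2 ≤ p3) :
    (X.l h12 (h12.trans h23) h23 le_rfl).range =
      (X.l (h12.trans h23) h23 le_rfl h12).ker ∧
    (X.l (h12.trans h23) h23 le_rfl h12).range = (X.dd h12 h23).ker ∧
    (X.dd h12 h23).range = (X.l h12 (h12.trans h23) h23 le_rfl).ker :=
  ⟨X.range_l_eq_ker_l h12 h23, X.range_l_eq_ker_dd h12 h23, X.range_dd_eq_ker_l h12 h23⟩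
end

section
/- Let E be an exact couple system over a bounded poset I, and let b ≥ p ≥ q ≥ z and b' ≥ p' ≥ q' ≥ z' in I with z ≤ p' and q ≤ b'. Then there is a unique homomorphism d : S^{pz}_{bq} → S^{p'z'}_{b'q'} with the following property: for every x ∈ ker(d_{pqz}) and every y ∈ D_z with i_{z,q}(y) = k_{p,q}(x) (such a y exists since j_{q,z}(k_{p,q}(x)) = 0 and the triangle D_z → D_q → E^q_z is exact), d sends the class of x to the class of j_{p',q'}(i_{z,p'}(y)), which indeed lies in ker(d_{p'q'z'}). -/
/-!
Sending `y ∈ D_z` to the class of `j_{p'q'}(i_{zp'}(y))` is a homomorphism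
`φ : D_z → S^{p'z'}_{b'q'}`. It kills `ker i_{zq} = im k_{qz}`, because by naturality of `k`
the element `j i k w` equals `j k ℓ w = d_{b'p'q'}(ℓ w)`; so `φ` factors through
`D_z / ker i_{zq} ≅ im i_{zq}`, and `d` is this factorisation applied to
`k_{pq}(x) ∈ im i_{zq}`. Finally `d` vanishes on `im d_{bpq}` since `k ∘ j = 0`.
-/

open Function

universe u v

namespace ExactCoupleSystem

variable {I : Type u} [PartialOrder I] [BoundedOrder I] (X : ExactCoupleSystem.{u, v} I)

lemma k_j_apply {q p : I} (h : q ≤ p) (y : X.D p) : X.k h (X.j h y) = 0 := by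
  rw [← AddMonoidHom.mem_ker, ← X.exact_jk h]
  exact ⟨y, rfl⟩

lemma i_k_apply_s11 {z q p' b' : I} (hzq : z ≤ q) (hpb' : p' ≤ b') (hqb' : q ≤ b')
    (hzp' : z ≤ p') (w : X.E q z hzq) :
    X.i hzp' (X.k hzq w) = X.k hpb' (X.l hzq hpb' hqb' hzp' w) :=
  DFunLike.congr_fun (X.k_nat hzq hpb' hqb' hzp') w

lemma k_mem_range_i {z q p : I} (hzq : z ≤ q) (hqp : q ≤ p) {x : X.E p q hqp}
    (hx : x ∈ (X.dd hzq hqp).ker) : X.k hqp x ∈ (X.i hzq).range := by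
  rw [i, X.exact_ij hzq]
  exact hx

lemma j_i_mem_ker_dd {z z' q' p' : I} (hzq' : z' ≤ q') (hqp' : q' ≤ p') (hzp' : z ≤ p')
    (y : X.D z) : X.j hqp' (X.i hzp' y) ∈ (X.dd hzq' hqp').ker := by
  change X.j hzq' (X.k hqp' (X.j hqp' (X.i hzp' y))) = 0
  rw [X.k_j_apply, map_zero]

section Differential

variable {z q p b z' q' p' b' : I} (hzq : z ≤ q) (hqp : q ≤ p) (hpb : p ≤ b)
  (hzq' : z' ≤ q') (hqp' : q' ≤ p') (hpb' : p' ≤ b') (hzp' : z ≤ p')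

/-- `y ↦ [j_{p'q'}(i_{zp'}(y))]`. -/
noncomputable def toStermOfD : X.D z →+ X.Sterm hzq' hqp' hpb' :=
  (QuotientAddGroup.mk' _).comp
    (((X.j hqp').comp (X.i hzp')).codRestrict _ (X.j_i_mem_ker_dd hzq' hqp' hzp'))

lemma toStermOfD_apply (y : X.D z) :
    X.toStermOfD hzq' hqp' hpb' hzp' y =
      X.Scls hzq' hqp' hpb' (X.j_i_mem_ker_dd hzq' hqp' hzp' y) :=
  rfl

lemma ker_i_le_ker_toStermOfD (hqb' : q ≤ b') :
    (X.i hzq).ker ≤ (X.toStermOfD hzq' hqp' hpb' hzp').ker := by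
  intro y hy
  obtain ⟨w, rfl⟩ : y ∈ (X.k hzq).range := by rwa [X.exact_ki hzq]
  rw [AddMonoidHom.mem_ker, toStermOfD_apply, Scls, QuotientAddGroup.eq_zero_iff]
  refine AddSubgroup.mem_addSubgroupOf.2 ⟨X.l hzq hpb' hqb' hzp' w, ?_⟩
  change X.j hqp' (X.k hpb' _) = X.j hqp' (X.i hzp' _)
  rw [X.i_k_apply_s11 hzq hpb' hqb' hzp']

/-- `x ↦ [j_{p'q'}(i_{zp'}(y))]` for any `y` with `i_{zq}(y) = k_{pq}(x)`, on `ker d_{pqz}`. -/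
noncomputable def differentialOnKer (hqb' : q ≤ b') :
    (X.dd hzq hqp).ker →+ X.Sterm hzq' hqp' hpb' :=
  ((QuotientAddGroup.lift _ _ (X.ker_i_le_ker_toStermOfD hzq hzq' hqp' hpb' hzp' hqb')).comp
    (QuotientAddGroup.quotientKerEquivRange (X.i hzq)).symm.toAddMonoidHom).comp
    (((X.k hqp).comp (X.dd hzq hqp).ker.subtype).codRestrict _
      fun x => X.k_mem_range_i hzq hqp x.2)

lemma differentialOnKer_apply (hqb' : q ≤ b') {x : X.E p q hqp} (hx : x ∈ (X.dd hzq hqp).ker)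
    (y : X.D z) (hy : X.i hzq y = X.k hqp x) :
    X.differentialOnKer hzq hqp hzq' hqp' hpb' hzp' hqb' ⟨x, hx⟩ =
      X.toStermOfD hzq' hqp' hpb' hzp' y := by
  have hmk : (QuotientAddGroup.quotientKerEquivRange (X.i hzq)).symm
      ⟨X.k hqp x, X.k_mem_range_i hzq hqp hx⟩ = QuotientAddGroup.mk y :=
    (AddEquiv.symm_apply_eq _).2 (Subtype.ext hy.symm)
  simp only [differentialOnKer, AddMonoidHom.comp_apply, AddMonoidHom.codRestrict_apply,
    AddSubgroup.coe_subtype, AddEquiv.coe_toAddMonoidHom, hmk, QuotientAddGroup.lift_mk]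

lemma range_dd_le_ker_differentialOnKer (hqb' : q ≤ b') :
    (X.dd hqp hpb).range.addSubgroupOf (X.dd hzq hqp).ker ≤
      (X.differentialOnKer hzq hqp hzq' hqp' hpb' hzp' hqb').ker := by
  rintro ⟨x, hx⟩ hxd
  obtain ⟨u, hu⟩ := AddSubgroup.mem_addSubgroupOf.1 hxd
  change X.dd hqp hpb u = x at hu
  have hkx : X.i hzq 0 = X.k hqp x := by
    rw [map_zero, ← hu]
    exact (X.k_j_apply hqp _).symm
  rw [AddMonoidHom.mem_ker, X.differentialOnKer_apply hzq hqp hzq' hqp' hpb' hzp' hqb' hx 0 hkx,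
    map_zero]

noncomputable def differential (hqb' : q ≤ b') :
    X.Sterm hzq hqp hpb →+ X.Sterm hzq' hqp' hpb' :=
  QuotientAddGroup.lift _ _
    (X.range_dd_le_ker_differentialOnKer hzq hqp hpb hzq' hqp' hpb' hzp' hqb')

lemma differential_Scls (hqb' : q ≤ b') {x : X.E p q hqp} (hx : x ∈ (X.dd hzq hqp).ker)
    (y : X.D z) (hy : X.i hzq y = X.k hqp x) :
    X.differential hzq hqp hpb hzq' hqp' hpb' hzp' hqb' (X.Scls hzq hqp hpb hx) =
      X.Scls hzq' hqp' hpb' (X.j_i_mem_ker_dd hzq' hqp' hzp' y) :=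
  X.differentialOnKer_apply hzq hqp hzq' hqp' hpb' hzp' hqb' hx y hy

end Differential

end ExactCoupleSystem

/-- Differentials: for `z ≤ q ≤ p ≤ b` and `z' ≤ q' ≤ p' ≤ b'` with
`z ≤ p'` and `q ≤ b'`, there is a unique homomorphism `d : S^{pz}_{bq} → S^{p'z'}_{b'q'}`
sending the class of `x` to the class of `j_{p'q'}(i_{z,p'}(y))` for any `y ∈ D_z` with
`i_{z,q}(y) = k_{pq}(x)`. -/
theorem statement11 {I : Type u} [PartialOrder I] [BoundedOrder I]
    (X : ExactCoupleSystem.{u, v} I) {z q p b z' q' p' b' : I}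
    (hzq : z ≤ q) (hqp : q ≤ p) (hpb : p ≤ b)
    (hzq' : z' ≤ q') (hqp' : q' ≤ p') (hpb' : p' ≤ b')
    (hzp' : z ≤ p') (hqb' : q ≤ b') :
    ∃! Dh : X.Sterm hzq hqp hpb →+ X.Sterm hzq' hqp' hpb',
      ∀ (x : X.E p q hqp) (hx : x ∈ (X.dd hzq hqp).ker)
        (y : X.D z) (_ : X.i hzq y = X.k hqp x)
        (hmem : X.j hqp' (X.i hzp' y) ∈ (X.dd hzq' hqp').ker),
        Dh (X.Scls hzq hqp hpb hx) = X.Scls hzq' hqp' hpb' hmem := by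
  refine ⟨X.differential hzq hqp hpb hzq' hqp' hpb' hzp' hqb',
    fun x hx y hy _ => X.differential_Scls hzq hqp hpb hzq' hqp' hpb' hzp' hqb' hx y hy, ?_⟩
  intro Dh hDh
  ext ⟨x, hx⟩
  obtain ⟨y, hy⟩ := X.k_mem_range_i hzq hqp hx
  exact (hDh x hx y hy (X.j_i_mem_ker_dd hzq' hqp' hzp' y)).trans
    (X.differential_Scls hzq hqp hpb hzq' hqp' hpb' hzp' hqb' hx y hy).symm
end

section
/- Let E be an exact couple system over a bounded poset I, and let b ≥ p ≥ q ≥ z and b' ≥ p' ≥ q' ≥ z' in I with z = p' and q = b'. Let d : S^{pz}_{bq} → S^{p'z'}_{b'q'} be the homomorphism characterized by: d sends the class of x ∈ ker(d_{pqz}) to the class of j_{p',q'}(i_{z,p'}(y)) for any y ∈ D_z with i_{z,q}(y) = k_{p,q}(x). Since q' ≤ p' = z, one has ker(d_{pqq'}) ⊆ ker(d_{pqz}), so S^{p,q'}_{b,q} := ker(d_{pqq'})/im(d_{bpq}) is a subgroup of S^{pz}_{bq}. Then this subgroup equals ker(d). -/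
open Function

universe u v

/-!
By exactness at `D_q`, `d_{pqz} x = j_{qz} (k x)` vanishes exactly when `k x` lifts along
`i_{zq}`; so `S^{p,q'}_{b,q}` consists of the classes `[x]` for which `k x` lifts to `D_{q'}`.
If `k x = i_{p'q} y`, then `d [x] = [j_{p'q'} y]` vanishes iff `y ∈ im i_{q'p'} + im k_{qp'}`, and
since `i ∘ k = 0` this happens iff `k x = i_{p'q} y` lies in the image of `i_{q'q}`.
-/

namespace ExactCoupleSystem

variable {I : Type u} [PartialOrder I] [BoundedOrder I] (X : ExactCoupleSystem.{u, v} I)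

lemma j_eq_zero_iff_s12 {q p : I} (h : q ≤ p) (d : X.D p) : X.j h d = 0 ↔ d ∈ (X.i h).range :=
  (SetLike.ext_iff.mp (X.exact_ij h) d).symm

lemma i_eq_zero_iff_s12 {q p : I} (h : q ≤ p) (d : X.D q) : X.i h d = 0 ↔ d ∈ (X.k h).range :=
  (SetLike.ext_iff.mp (X.exact_ki h) d).symm

lemma k_j {q p : I} (h : q ≤ p) (d : X.D p) : X.k h (X.j h d) = 0 :=
  (SetLike.ext_iff.mp (X.exact_jk h) _).mp ⟨d, rfl⟩

lemma j_i {q p : I} (h : q ≤ p) (d : X.D q) : X.j h (X.i h d) = 0 :=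
  (X.j_eq_zero_iff_s12 h _).mpr ⟨d, rfl⟩

lemma i_k {q p : I} (h : q ≤ p) (e : X.E p q h) : X.i h (X.k h e) = 0 :=
  (X.i_eq_zero_iff_s12 h _).mpr ⟨e, rfl⟩

lemma i_i {z q p : I} (h₁ : z ≤ q) (h₂ : q ≤ p) (d : X.D z) :
    X.i h₂ (X.i h₁ d) = X.i (h₁.trans h₂) d :=
  DFunLike.congr_fun (X.l_comp bot_le bot_le bot_le h₁ le_rfl h₂ le_rfl) d

lemma i_refl {p : I} (h : p ≤ p) (d : X.D p) : X.i h d = d := by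
  rw [i, X.l_id]
  rfl

lemma mem_ker_dd_iff {z q p : I} (hzq : z ≤ q) (hqp : q ≤ p) (x : X.E p q hqp) :
    x ∈ (X.dd hzq hqp).ker ↔ X.k hqp x ∈ (X.i hzq).range :=
  X.j_eq_zero_iff_s12 hzq _

lemma range_i_mono {q' z q : I} (h₁ : q' ≤ z) (h₂ : z ≤ q) :
    (X.i (h₁.trans h₂)).range ≤ (X.i h₂).range := by
  rintro _ ⟨w, rfl⟩
  exact ⟨X.i h₁ w, X.i_i h₁ h₂ w⟩

lemma ker_dd_mono {q' z q p : I} (h₁ : q' ≤ z) (h₂ : z ≤ q) (hqp : q ≤ p) :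
    (X.dd (h₁.trans h₂) hqp).ker ≤ (X.dd h₂ hqp).ker := fun x hx =>
  (X.mem_ker_dd_iff h₂ hqp x).mpr
    (X.range_i_mono h₁ h₂ ((X.mem_ker_dd_iff (h₁.trans h₂) hqp x).mp hx))

lemma j_mem_ker_dd {z q p : I} (hzq : z ≤ q) (hqp : q ≤ p) (d : X.D p) :
    X.j hqp d ∈ (X.dd hzq hqp).ker := by
  change X.j hzq (X.k hqp (X.j hqp d)) = 0
  rw [X.k_j, map_zero]

lemma j_mem_range_dd_iff {q' p' q : I} (hq'p' : q' ≤ p') (hp'q : p' ≤ q) (y : X.D p') :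
    X.j hq'p' y ∈ (X.dd hq'p' hp'q).range ↔
      X.i hp'q y ∈ (X.i (hq'p'.trans hp'q)).range := by
  constructor
  · rintro ⟨e, he⟩
    obtain ⟨w, hw⟩ := (X.j_eq_zero_iff_s12 hq'p' (y - X.k hp'q e)).mp <| by
      change X.j hq'p' (X.k hp'q e) = X.j hq'p' y at he
      rw [map_sub, he, sub_self]
    refine ⟨w, ?_⟩
    rw [← X.i_i hq'p' hp'q, hw, map_sub, X.i_k, sub_zero]
  · rintro ⟨w, hw⟩
    obtain ⟨e, he⟩ := (X.i_eq_zero_iff_s12 hp'q (y - X.i hq'p' w)).mp <| by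
      rw [map_sub, X.i_i, hw, sub_self]
    refine ⟨e, ?_⟩
    change X.j hq'p' (X.k hp'q e) = X.j hq'p' y
    rw [he, map_sub, X.j_i, sub_zero]

end ExactCoupleSystem

/-- Kernel of the differential: with `z = p'` and `q = b'`, for the
differential `d : S^{pz}_{bq} → S^{p'z'}_{b'q'}` (characterized as in Statement 11),
one has `ker(d_{pqq'}) ⊆ ker(d_{pqz})`, and the subgroup
`S^{p,q'}_{b,q} = ker(d_{pqq'})/im(d_{bpq})` of `S^{pz}_{bq}` equals `ker(d)`. -/
theorem statement12 {I : Type u} [PartialOrder I] [BoundedOrder I]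
    (X : ExactCoupleSystem.{u, v} I) {z' q' p' q p b : I}
    (hz'q' : z' ≤ q') (hq'p' : q' ≤ p') (hp'q : p' ≤ q) (hqp : q ≤ p) (hpb : p ≤ b) :
    (X.dd (hq'p'.trans hp'q) hqp).ker ≤ (X.dd hp'q hqp).ker ∧
    ∀ Dh : X.Sterm hp'q hqp hpb →+ X.Sterm hz'q' hq'p' hp'q,
      (∀ (x : X.E p q hqp) (hx : x ∈ (X.dd hp'q hqp).ker)
        (y : X.D p') (_ : X.i hp'q y = X.k hqp x)
        (hmem : X.j hq'p' (X.i (le_refl p') y) ∈ (X.dd hz'q' hq'p').ker),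
        Dh (X.Scls hp'q hqp hpb hx) = X.Scls hz'q' hq'p' hp'q hmem) →
      Dh.ker = ((X.dd (hq'p'.trans hp'q) hqp).ker.addSubgroupOf
          (X.dd hp'q hqp).ker).map
        (QuotientAddGroup.mk' ((X.dd hqp hpb).range.addSubgroupOf
          (X.dd hp'q hqp).ker)) := by
  refine ⟨X.ker_dd_mono hq'p' hp'q hqp, fun Dh hDh => ?_⟩
  have hDh_eq_zero_iff : ∀ (x : X.E p q hqp) (hx : x ∈ (X.dd hp'q hqp).ker),
      Dh (X.Scls hp'q hqp hpb hx) = 0 ↔ x ∈ (X.dd (hq'p'.trans hp'q) hqp).ker := by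
    intro x hx
    obtain ⟨y, hy⟩ := (X.mem_ker_dd_iff hp'q hqp x).mp hx
    rw [hDh x hx y hy (X.j_mem_ker_dd hz'q' hq'p' _), ExactCoupleSystem.Scls,
      QuotientAddGroup.eq_zero_iff, AddSubgroup.mem_addSubgroupOf, X.mem_ker_dd_iff, ← hy,
      X.i_refl]
    exact X.j_mem_range_dd_iff hq'p' hp'q y
  ext c
  obtain ⟨⟨x, hx⟩, rfl⟩ := QuotientAddGroup.mk'_surjective _ c
  constructor
  · exact fun hc => ⟨⟨x, hx⟩, (hDh_eq_zero_iff x hx).mp hc, rfl⟩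
  · rintro ⟨⟨x', hx'⟩, hx'_mem, hx'_eq⟩
    rw [AddMonoidHom.mem_ker, ← hx'_eq]
    exact (hDh_eq_zero_iff x' hx').mpr hx'_mem
end
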